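/- arXiv:2605.14613 — 2 statements merged into one kernel-verified Lean document; each statement's English description precedes it below -/
import Mathlib

section
/- For every k ≥ 1 and n ≥ 0, the number of edges of the Munarini graph M_{n,k} equals the sum of the weights of its vertices: |E(M_{n,k})| = Σ_{u ∈ ℱ_{n,k}} w(u). -/
/-- The `k`-Fibonacci numbers: `F_{0,k} = 0`, `F_{1,k} = 1`,
`F_{n,k} = k·F_{n-1,k} + F_{n-2,k}`. -/
def kFib (k : ℕ) : ℕ → ℕ
  | 0 => 0
  | 1 => 1
  | n + 2 => k * kFib k (n + 1) + kFib k n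

/-- `k`-generalized Pell strings: strings over the alphabet `{0,…,k}` in which every
maximal run of the letter `k` has even length (equivalently, elements of the monoid
generated by `0,…,k-1` and `kk`). -/
inductive GenPell (k : ℕ) : List ℕ → Prop
  | nil : GenPell k []
  | cons (i : ℕ) (s : List ℕ) : i < k → GenPell k s → GenPell k (i :: s)
  | kk (s : List ℕ) : GenPell k s → GenPell k (k :: k :: s)

/-- Vertices of the Munarini graph `M_{n,k}`: `k`-generalized Pell strings of length `n`. -/
abbrev PellVtx (n k : ℕ) := {s : List ℕ // s.length = n ∧ GenPell k s}

/-- Elementary Munarini move: replace one `0` by some `i ∈ {1,…,k-1}`, or replace a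
substring `00` by `kk`. -/
def munariniRel (k : ℕ) (u v : List ℕ) : Prop :=
  (∃ a b : List ℕ, ∃ i : ℕ, 0 < i ∧ i < k ∧ u = a ++ 0 :: b ∧ v = a ++ i :: b) ∨
  (∃ a b : List ℕ, u = a ++ 0 :: 0 :: b ∧ v = a ++ k :: k :: b)

/-- The Munarini graph `M_{n,k}`. -/
def MunariniGraph (n k : ℕ) : SimpleGraph (PellVtx n k) :=
  SimpleGraph.fromRel fun u v => munariniRel k u.val v.val

/-- Elementary move of the generalized Pell graph: replace one `i ∈ {0,…,k-2}` by `i+1`,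
or replace a substring `(k-1)(k-1)` by `kk`. -/
def piRel (k : ℕ) (u v : List ℕ) : Prop :=
  (∃ a b : List ℕ, ∃ i : ℕ, i < k - 1 ∧ u = a ++ i :: b ∧ v = a ++ (i + 1) :: b) ∨
  (∃ a b : List ℕ, u = a ++ (k - 1) :: (k - 1) :: b ∧ v = a ++ k :: k :: b)

/-- The generalized Pell graph `Π_{n,k}`. -/
def PiGraph (n k : ℕ) : SimpleGraph (PellVtx n k) :=
  SimpleGraph.fromRel fun u v => piRel k u.val v.val

/-- Two binary strings differ in exactly one coordinate (oriented version: `u` has a `false`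
where `v` has a `true`, all other coordinates agree). -/
def diffOne (u v : List Bool) : Prop :=
  ∃ a b : List Bool, u = a ++ false :: b ∧ v = a ++ true :: b

/-- The hypercube `Q_m` on binary strings of length `m`; two strings are adjacent iff
they differ in exactly one coordinate. -/
def QCube (m : ℕ) : SimpleGraph {s : List Bool // s.length = m} :=
  SimpleGraph.fromRel fun u v => diffOne u.val v.val

/-- A Fibonacci string: a binary string with no two consecutive `true`s. -/
def FibStr (s : List Bool) : Prop := List.Chain' (fun a b => ¬(a = true ∧ b = true)) s

/-- The Fibonacci cube `Γ_m`: the subgraph of `Q_m` induced by Fibonacci strings. -/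
def FibCube (m : ℕ) : SimpleGraph {s : List Bool // s.length = m ∧ FibStr s} :=
  SimpleGraph.fromRel fun u v => diffOne u.val v.val

/-- The binary block `A_i` of length `k`: `A_0 = 0^k` and `A_i = 0^{i-1} 1 0^{k-i}`
for `1 ≤ i ≤ k`. -/
def blockA (k i : ℕ) : List Bool :=
  if i = 0 then List.replicate k false
  else List.replicate (i - 1) false ++ true :: List.replicate (k - i) false

/-- Munarini strings: concatenations of blocks `A_0,…,A_k` in which every block `A_k`
is immediately followed by a block `A_0`. -/
inductive MunariniStr (k : ℕ) : List Bool → Prop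
  | nil : MunariniStr k []
  | block (i : ℕ) (s : List Bool) : i < k → MunariniStr k s →
      MunariniStr k (blockA k i ++ s)
  | kblock (s : List Bool) : MunariniStr k s →
      MunariniStr k (blockA k k ++ (blockA k 0 ++ s))

/-- Vertices of `Γ*_{n,k}`: Munarini strings of length `k·n`. -/
abbrev MunStrVtx (n k : ℕ) := {s : List Bool // s.length = k * n ∧ MunariniStr k s}

/-- `Γ*_{n,k}`: the subgraph of the hypercube `Q_{kn}` induced by Munarini strings. -/
def GammaStar (n k : ℕ) : SimpleGraph (MunStrVtx n k) :=
  SimpleGraph.fromRel fun u v => diffOne u.val v.val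

/-- The map `Ψ̂`, replacing each letter `i ∈ {0,…,k-1}` by the block `A_i` and each
substring `kk` by `A_k A_0`. -/
def psi (k : ℕ) : List ℕ → List Bool
  | [] => []
  | [i] => blockA k i
  | i :: j :: s =>
      if i = k then blockA k k ++ (blockA k 0 ++ psi k s)
      else blockA k i ++ psi k (j :: s)

/-- Coordinatewise majority of three binary strings. -/
def maj3 : List Bool → List Bool → List Bool → List Bool
  | a :: u, b :: v, c :: w => ((a && b) || (a && c) || (b && c)) :: maj3 u v w
  | _, _, _ => []

/-- The weight of a `(k+1)`-ary string: `w(u) = Σ_{i=1}^{k-1} |u|_i + |u|_k / 2`. -/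
def pweight (k : ℕ) (u : List ℕ) : ℕ :=
  u.countP (fun a => decide (0 < a ∧ a < k)) + u.count k / 2

/-- Words over `{0,…,2k}` where every maximal run of `0`s and every maximal run of `1`s
has even length. -/
inductive EvenRuns01 (k : ℕ) : List ℕ → Prop
  | nil : EvenRuns01 k []
  | cons (i : ℕ) (s : List ℕ) : 2 ≤ i → i ≤ 2 * k → EvenRuns01 k s → EvenRuns01 k (i :: s)
  | zz (s : List ℕ) : EvenRuns01 k s → EvenRuns01 k (0 :: 0 :: s)
  | oo (s : List ℕ) : EvenRuns01 k s → EvenRuns01 k (1 :: 1 :: s)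

/-- The number of maximal induced hypercubes of dimension `p` in a graph `G`:
vertex subsets inducing a subgraph isomorphic to `Q_p` that are not properly contained
in any vertex subset inducing a hypercube. -/
noncomputable def maxCubeCount {V : Type} (G : SimpleGraph V) (p : ℕ) : ℕ :=
  {S : Set V | Nonempty (G.induce S ≃g QCube p) ∧
      ∀ T : Set V, S ⊆ T → (∃ q : ℕ, Nonempty (G.induce T ≃g QCube q)) → T = S}.ncard

lemma genpell_le {k : ℕ} {s : List ℕ} (h : GenPell k s) : ∀ a ∈ s, a ≤ k := by
  induction h with
  | nil => simp
  | cons i s hi hs ih => intro a ha; rcases List.mem_cons.1 ha with rfl | ha; omega; exact ih a ha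
  | kk s hs ih => intro a ha; rcases List.mem_cons.1 ha with rfl | ha
                  · rfl
                  · rcases List.mem_cons.1 ha with rfl | ha; rfl; exact ih a ha

lemma genpell_cons_iff {k i : ℕ} {s : List ℕ} (hi : i < k) :
    GenPell k (i :: s) ↔ GenPell k s := by
  constructor
  · intro h
    cases h with
    | cons _ _ _ h' => exact h'
    | kk s' h' => omega
  · exact fun h => GenPell.cons i s hi h

lemma genpell_kk_inv {k : ℕ} {s : List ℕ} (h : GenPell k (k :: k :: s)) : GenPell k s := by
  cases h with
  | cons _ _ hlt h' => omega
  | kk _ h' => exact h'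

lemma genpell_not_k0 {k : ℕ} (hk : 1 ≤ k) (b : List ℕ) : ¬ GenPell k (k :: 0 :: b) := by
  intro h
  cases h with
  | cons _ _ hlt _ => omega
  | kk _ _ => omega

lemma rel_length {k : ℕ} {u v : List ℕ} (h : munariniRel k u v) : u.length = v.length := by
  rcases h with ⟨a, b, i, _, _, rfl, rfl⟩ | ⟨a, b, rfl, rfl⟩ <;> simp

lemma rel_cons {k x : ℕ} {u v : List ℕ} (h : munariniRel k u v) :
    munariniRel k (x :: u) (x :: v) := by
  rcases h with ⟨a, b, i, h1, h2, rfl, rfl⟩ | ⟨a, b, rfl, rfl⟩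
  · exact Or.inl ⟨x :: a, b, i, h1, h2, rfl, rfl⟩
  · exact Or.inr ⟨x :: a, b, rfl, rfl⟩

lemma rel_pweight {k : ℕ} (hk : 1 ≤ k) {u v : List ℕ} (h : munariniRel k u v) :
    pweight k v = pweight k u + 1 := by
  rcases h with ⟨a, b, i, h1, h2, rfl, rfl⟩ | ⟨a, b, rfl, rfl⟩ <;>
  · simp only [pweight, List.countP_append, List.countP_cons, List.count_append,
      List.count_cons, decide_eq_true_eq]
    simp only [beq_iff_eq]
    split_ifs <;> omega

def Fiber (k : ℕ) (v : List ℕ) : Set (List ℕ) := {u | GenPell k u ∧ munariniRel k u v}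

lemma pw_cons0 {k : ℕ} (hk : 1 ≤ k) (s : List ℕ) : pweight k (0 :: s) = pweight k s := by
  simp only [pweight, List.countP_cons, List.count_cons, decide_eq_true_eq, beq_iff_eq]
  split_ifs <;> omega

lemma pw_consi {k i : ℕ} (h1 : 0 < i) (h2 : i < k) (s : List ℕ) :
    pweight k (i :: s) = pweight k s + 1 := by
  simp only [pweight, List.countP_cons, List.count_cons, decide_eq_true_eq, beq_iff_eq]
  split_ifs <;> omega

lemma pw_kk {k : ℕ} (s : List ℕ) : pweight k (k :: k :: s) = pweight k s + 1 := by
  simp only [pweight, List.countP_cons, List.count_cons, decide_eq_true_eq, beq_iff_eq]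
  split_ifs <;> omega

lemma fiber_nil {k : ℕ} : Fiber k [] = ∅ := by
  ext u
  simp only [Fiber, Set.mem_setOf_eq, Set.mem_empty_iff_false, iff_false, not_and]
  rintro hg (⟨a, b, i, h1, h2, hu, hv⟩ | ⟨a, b, hu, hv⟩) <;> simp at hv

lemma fiber_cons0 {k : ℕ} (hk : 1 ≤ k) (s : List ℕ) :
    Fiber k (0 :: s) = (fun u => 0 :: u) '' Fiber k s := by
  ext u
  constructor
  · rintro ⟨hg, ⟨a, b, i, h1, h2, rfl, hv⟩ | ⟨a, b, rfl, hv⟩⟩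
    · rcases a with _ | ⟨x, a'⟩
      · simp at hv; omega
      · simp only [List.cons_append, List.cons.injEq] at hv
        obtain ⟨rfl, rfl⟩ := hv
        refine ⟨a' ++ 0 :: b, ⟨(genpell_cons_iff hk).1 hg, Or.inl ⟨a', b, i, h1, h2, rfl, rfl⟩⟩, rfl⟩
    · rcases a with _ | ⟨x, a'⟩
      · simp only [List.nil_append, List.cons.injEq] at hv; omega
      · simp only [List.cons_append, List.cons.injEq] at hv
        obtain ⟨rfl, rfl⟩ := hv
        refine ⟨a' ++ 0 :: 0 :: b, ⟨(genpell_cons_iff hk).1 hg, Or.inr ⟨a', b, rfl, rfl⟩⟩, rfl⟩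
  · rintro ⟨u', ⟨hg, hrel⟩, rfl⟩
    exact ⟨GenPell.cons 0 u' hk hg, rel_cons hrel⟩

lemma fiber_consi {k i : ℕ} (h1 : 0 < i) (h2 : i < k) {s : List ℕ} (hs : GenPell k s) :
    Fiber k (i :: s) = insert (0 :: s) ((fun u => i :: u) '' Fiber k s) := by
  have hk : 1 ≤ k := by omega
  ext u
  constructor
  · rintro ⟨hg, ⟨a, b, j, g1, g2, rfl, hv⟩ | ⟨a, b, rfl, hv⟩⟩
    · rcases a with _ | ⟨x, a'⟩
      · simp only [List.nil_append, List.cons.injEq] at hv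
        obtain ⟨rfl, rfl⟩ := hv
        exact Or.inl rfl
      · simp only [List.cons_append, List.cons.injEq] at hv
        obtain ⟨rfl, rfl⟩ := hv
        refine Or.inr ⟨a' ++ 0 :: b, ⟨(genpell_cons_iff h2).1 hg, Or.inl ⟨a', b, j, g1, g2, rfl, rfl⟩⟩, rfl⟩
    · rcases a with _ | ⟨x, a'⟩
      · simp only [List.nil_append, List.cons.injEq] at hv; omega
      · simp only [List.cons_append, List.cons.injEq] at hv
        obtain ⟨rfl, rfl⟩ := hv
        refine Or.inr ⟨a' ++ 0 :: 0 :: b, ⟨(genpell_cons_iff h2).1 hg, Or.inr ⟨a', b, rfl, rfl⟩⟩, rfl⟩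
  · rintro (rfl | ⟨u', ⟨hg, hrel⟩, rfl⟩)
    · exact ⟨GenPell.cons 0 s hk hs, Or.inl ⟨[], s, i, h1, h2, rfl, rfl⟩⟩
    · exact ⟨GenPell.cons i u' h2 hg, rel_cons hrel⟩

lemma fiber_kk {k : ℕ} (hk : 1 ≤ k) {s : List ℕ} (hs : GenPell k s) :
    Fiber k (k :: k :: s) = insert (0 :: 0 :: s) ((fun u => k :: k :: u) '' Fiber k s) := by
  ext u
  constructor
  · rintro ⟨hg, ⟨a, b, j, g1, g2, rfl, hv⟩ | ⟨a, b, rfl, hv⟩⟩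
    · rcases a with _ | ⟨x, _ | ⟨y, a'⟩⟩
      · simp only [List.nil_append, List.cons.injEq] at hv; omega
      · simp only [List.cons_append, List.nil_append, List.cons.injEq] at hv; omega
      · simp only [List.cons_append, List.cons.injEq] at hv
        obtain ⟨rfl, rfl, rfl⟩ := hv
        refine Or.inr ⟨a' ++ 0 :: b, ⟨genpell_kk_inv hg, Or.inl ⟨a', b, j, g1, g2, rfl, rfl⟩⟩, rfl⟩
    · rcases a with _ | ⟨x, _ | ⟨y, a'⟩⟩
      · simp only [List.nil_append, List.cons.injEq, true_and] at hv
        obtain rfl := hv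
        exact Or.inl rfl
      · simp only [List.cons_append, List.nil_append, List.cons.injEq, true_and] at hv
        obtain ⟨rfl, rfl⟩ := hv
        exact absurd hg (genpell_not_k0 hk _)
      · simp only [List.cons_append, List.cons.injEq] at hv
        obtain ⟨rfl, rfl, rfl⟩ := hv
        refine Or.inr ⟨a' ++ 0 :: 0 :: b, ⟨genpell_kk_inv hg, Or.inr ⟨a', b, rfl, rfl⟩⟩, rfl⟩
  · rintro (rfl | ⟨u', ⟨hg, hrel⟩, rfl⟩)
    · exact ⟨GenPell.cons 0 _ hk (GenPell.cons 0 s hk hs), Or.inr ⟨[], s, rfl, rfl⟩⟩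
    · exact ⟨GenPell.kk u' hg, rel_cons (rel_cons hrel)⟩

lemma fiber_spec {k : ℕ} (hk : 1 ≤ k) {v : List ℕ} (hv : GenPell k v) :
    (Fiber k v).Finite ∧ (Fiber k v).ncard = pweight k v := by
  induction hv with
  | nil => rw [fiber_nil]; exact ⟨Set.finite_empty, by simp [pweight]⟩
  | cons i s hi hs ih =>
    rcases Nat.eq_zero_or_pos i with rfl | hpos
    · rw [fiber_cons0 hk, pw_cons0 hk]
      exact ⟨ih.1.image _, by
        rw [Set.ncard_image_of_injective _ (fun a b h => List.cons_injective h)]; exact ih.2⟩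
    · rw [fiber_consi hpos hi hs, pw_consi hpos hi]
      have hnot : (0 : ℕ) :: s ∉ (fun u => i :: u) '' Fiber k s := by
        rintro ⟨u', _, h⟩
        simp only [List.cons.injEq] at h
        omega
      refine ⟨(ih.1.image _).insert _, ?_⟩
      rw [Set.ncard_insert_of_notMem hnot (ih.1.image _),
        Set.ncard_image_of_injective _ (fun a b h => List.cons_injective h), ih.2]
  | kk s hs ih =>
    rw [fiber_kk hk hs, pw_kk]
    have hnot : (0 : ℕ) :: 0 :: s ∉ (fun u => k :: k :: u) '' Fiber k s := by
      rintro ⟨u', _, h⟩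
      simp only [List.cons.injEq] at h
      omega
    have hinj : Function.Injective (fun u : List ℕ => k :: k :: u) := by
      intro a b h; simpa using h
    refine ⟨(ih.1.image _).insert _, ?_⟩
    rw [Set.ncard_insert_of_notMem hnot (ih.1.image _),
      Set.ncard_image_of_injective _ hinj, ih.2]


lemma finite_bdd (k : ℕ) : ∀ n : ℕ, {s : List ℕ | s.length = n ∧ ∀ a ∈ s, a ≤ k}.Finite := by
  intro n
  induction n with
  | zero =>
    refine Set.Finite.subset (Set.finite_singleton []) ?_
    rintro s ⟨h1, -⟩
    simp [List.length_eq_zero_iff.1 h1]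
  | succ m ih =>
    refine Set.Finite.subset (Set.Finite.image2 List.cons (Set.finite_Iic k) ih) ?_
    rintro s ⟨h1, h2⟩
    rcases s with _ | ⟨x, t⟩
    · simp at h1
    · exact Set.mem_image2_of_mem (h2 x List.mem_cons_self)
        ⟨by simpa using h1, fun a ha => h2 a (List.mem_cons_of_mem _ ha)⟩


/-- the number of edges of `M_{n,k}` equals the sum of the weights of its
vertices. -/
theorem munarini_edges_eq_sum_weights (k n : ℕ) (hk : 1 ≤ k) :
    (MunariniGraph n k).edgeSet.ncard = ∑ᶠ u : PellVtx n k, pweight k u.val := by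
  classical
  have hfinV : Finite (PellVtx n k) := by
    have hsub : {s : List ℕ | s.length = n ∧ GenPell k s} ⊆
        {s : List ℕ | s.length = n ∧ ∀ a ∈ s, a ≤ k} :=
      fun s hs => ⟨hs.1, genpell_le hs.2⟩
    exact ((finite_bdd k n).subset hsub).to_subtype
  have : Fintype (PellVtx n k) := Fintype.ofFinite _
  rw [finsum_eq_sum_of_fintype]
  set P : Set (PellVtx n k × PellVtx n k) := {p | munariniRel k p.1.val p.2.val} with hP
  have hPfin : P.Finite := Set.toFinite P
  have hEdge : (MunariniGraph n k).edgeSet = (fun p : PellVtx n k × PellVtx n k => s(p.1, p.2)) '' P := by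
    ext e
    induction e using Sym2.ind with
    | _ u v =>
      simp only [SimpleGraph.mem_edgeSet, MunariniGraph, SimpleGraph.fromRel_adj,
        Set.mem_image, hP, Set.mem_setOf_eq, Prod.exists]
      constructor
      · rintro ⟨hne, h | h⟩
        · exact ⟨u, v, h, rfl⟩
        · exact ⟨v, u, h, Sym2.eq_swap⟩
      · rintro ⟨p1, p2, hp, he⟩
        have hne : p1 ≠ p2 := by
          intro h
          have := rel_pweight hk hp
          rw [h] at this
          omega
        rw [Sym2.eq_iff] at he
        rcases he with ⟨rfl, rfl⟩ | ⟨rfl, rfl⟩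
        · exact ⟨hne, Or.inl hp⟩
        · exact ⟨hne.symm, Or.inr hp⟩
  have hinj : Set.InjOn (fun p : PellVtx n k × PellVtx n k => s(p.1, p.2)) P := by
    rintro ⟨a1, a2⟩ ha ⟨b1, b2⟩ hb he
    simp only [Sym2.eq_iff] at he
    rcases he with ⟨rfl, rfl⟩ | ⟨rfl, rfl⟩
    · rfl
    · exfalso
      simp only [hP, Set.mem_setOf_eq] at ha hb
      have h1 := rel_pweight hk ha
      have h2 := rel_pweight hk hb
      omega
  rw [hEdge, Set.ncard_image_of_injOn hinj, Set.ncard_eq_toFinset_card' P]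
  have hfiber : ∀ x ∈ P.toFinset, Prod.snd x ∈ (Finset.univ : Finset (PellVtx n k)) :=
    fun x _ => Finset.mem_univ _
  rw [Finset.card_eq_sum_card_fiberwise hfiber]
  refine Finset.sum_congr rfl fun v _ => ?_
  have hinj2 : Set.InjOn (fun p : PellVtx n k × PellVtx n k => p.1.val)
      ↑(P.toFinset.filter fun p => p.2 = v) := by
    rintro ⟨a1, a2⟩ ha ⟨b1, b2⟩ hb he
    simp only [Finset.coe_filter, Set.mem_setOf_eq] at ha hb
    exact Prod.ext (Subtype.ext he) (ha.2.trans hb.2.symm)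
  have hset : (fun p : PellVtx n k × PellVtx n k => p.1.val) '' ↑(P.toFinset.filter fun p => p.2 = v) =
      Fiber k v.val := by
    ext u
    constructor
    · rintro ⟨⟨p1, p2⟩, hp, rfl⟩
      simp only [Finset.coe_filter, Set.mem_setOf_eq, Set.mem_toFinset, hP] at hp
      obtain ⟨hrel, rfl⟩ := hp
      exact ⟨p1.2.2, hrel⟩
    · rintro ⟨hg, hrel⟩
      have hlen : u.length = n := (rel_length hrel).trans v.2.1
      refine ⟨(⟨u, hlen, hg⟩, v), ?_, rfl⟩
      simp only [Finset.coe_filter, Set.mem_setOf_eq, Set.mem_toFinset, hP]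
      exact ⟨hrel, trivial⟩
  rw [← Set.ncard_coe_finset, ← Set.ncard_image_of_injOn hinj2, hset,
    (fiber_spec hk v.2.2).2]
end

section
/- For every k ≥ 2, n ≥ 0 and p ≥ 0, the number of maximal induced hypercubes of dimension p in the Munarini graph M_{n,k} equals (k−1)^{2p−n}·C(p, n−p) when 2p ≥ n and p ≤ n, and equals 0 otherwise. -/
namespace MC
open scoped symmDiff
open SimpleGraph

abbrev QV (p : ℕ) := {s : List Bool // s.length = p}

def qvEquiv (p : ℕ) : List.Vector Bool p ≃ QV p := Equiv.refl _
instance (p : ℕ) : Fintype (QV p) := Fintype.ofEquiv _ (qvEquiv p)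
lemma card_QV (p : ℕ) : Fintype.card (QV p) = 2 ^ p := by
  rw [← Fintype.card_congr (qvEquiv p), card_vector]; simp

variable {α : Type} [DecidableEq α]

def insRel (A B : Finset α) : Prop := ∃ x, x ∉ A ∧ B = insert x A

def bigG (α : Type) [DecidableEq α] : SimpleGraph (Finset α) := SimpleGraph.fromRel insRel

lemma bigG_adj {A B : Finset α} : (bigG α).Adj A B ↔ insRel A B ∨ insRel B A := by
  rw [bigG, SimpleGraph.fromRel_adj, and_iff_right_iff_imp]
  rintro (⟨x, hx, rfl⟩ | ⟨x, hx, rfl⟩) h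
  · exact hx (h ▸ Finset.mem_insert_self x A)
  · exact hx (h.symm ▸ Finset.mem_insert_self x B)

lemma symmDiff_single {A B : Finset α} {x : α} :
    A ∆ B = {x} ↔ (x ∉ A ∧ B = insert x A) ∨ (x ∉ B ∧ A = insert x B) := by
  constructor
  · intro h
    have hx : x ∈ A ∆ B := h ▸ Finset.mem_singleton_self x
    have hmem : ∀ y, y ∈ A ∆ B ↔ y = x := by
      intro y; rw [h, Finset.mem_singleton]
    rw [Finset.mem_symmDiff] at hx
    rcases hx with ⟨hxA, hxB⟩ | ⟨hxB, hxA⟩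
    · right; refine ⟨hxB, ?_⟩
      ext y; rw [Finset.mem_insert]
      constructor
      · intro hy; by_cases hxy : y = x
        · exact Or.inl hxy
        · right; by_contra hyB
          exact hxy ((hmem y).mp (Finset.mem_symmDiff.mpr (Or.inl ⟨hy, hyB⟩)))
      · rintro (rfl | hy)
        · exact hxA
        · by_contra hyA
          have := (hmem y).mp (Finset.mem_symmDiff.mpr (Or.inr ⟨hy, hyA⟩))
          subst this; exact hxB hy
    · left; refine ⟨hxA, ?_⟩
      ext y; rw [Finset.mem_insert]
      constructor
      · intro hy; by_cases hxy : y = x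
        · exact Or.inl hxy
        · right; by_contra hyA
          exact hxy ((hmem y).mp (Finset.mem_symmDiff.mpr (Or.inr ⟨hy, hyA⟩)))
      · rintro (rfl | hy)
        · exact hxB
        · by_contra hyB
          have := (hmem y).mp (Finset.mem_symmDiff.mpr (Or.inl ⟨hy, hyB⟩))
          subst this; exact hxA hy
  · rintro (⟨hx, rfl⟩ | ⟨hx, rfl⟩) <;> ext y <;>
      simp only [Finset.mem_symmDiff, Finset.mem_insert, Finset.mem_singleton] <;>
      constructor
    · rintro (⟨h1, h2⟩ | ⟨h1, h2⟩)
      · exact absurd (Or.inr h1) h2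
      · rcases h1 with rfl | h1
        · rfl
        · exact absurd h1 h2
    · rintro rfl; exact Or.inr ⟨Or.inl rfl, hx⟩
    · rintro (⟨h1, h2⟩ | ⟨h1, h2⟩)
      · rcases h1 with rfl | h1
        · rfl
        · exact absurd h1 h2
      · exact absurd (Or.inr h1) h2
    · rintro rfl; exact Or.inl ⟨Or.inl rfl, hx⟩

lemma bigG_adj_symmDiff {A B : Finset α} : (bigG α).Adj A B ↔ ∃ x, A ∆ B = {x} := by
  rw [bigG_adj]
  constructor
  · rintro (⟨x, hx, rfl⟩ | ⟨x, hx, rfl⟩)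
    · exact ⟨x, symmDiff_single.mpr (Or.inl ⟨hx, rfl⟩)⟩
    · exact ⟨x, symmDiff_single.mpr (Or.inr ⟨hx, rfl⟩)⟩
  · rintro ⟨x, hx⟩
    rcases symmDiff_single.mp hx with ⟨h1, h2⟩ | ⟨h1, h2⟩
    · exact Or.inl ⟨x, h1, h2⟩
    · exact Or.inr ⟨x, h1, h2⟩

lemma qcube_adj {p : ℕ} {u v : QV p} :
    (QCube p).Adj u v ↔ u ≠ v ∧ (diffOne u.1 v.1 ∨ diffOne v.1 u.1) :=
  SimpleGraph.fromRel_adj _ u v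

lemma diffOne_cons {a b : Bool} {s t : List Bool} :
    diffOne (a :: s) (b :: t) ↔ (a = false ∧ b = true ∧ s = t) ∨ (a = b ∧ diffOne s t) := by
  constructor
  · rintro ⟨c, d, h1, h2⟩
    cases c with
    | nil =>
      simp only [List.nil_append, List.cons.injEq] at h1 h2
      exact Or.inl ⟨h1.1, h2.1, h1.2.trans h2.2.symm⟩
    | cons x c' =>
      simp only [List.cons_append, List.cons.injEq] at h1 h2
      exact Or.inr ⟨h1.1.trans h2.1.symm, c', d, h1.2, h2.2⟩
  · rintro (⟨rfl, rfl, rfl⟩ | ⟨rfl, c, d, h1, h2⟩)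
    · exact ⟨[], s, rfl, rfl⟩
    · exact ⟨a :: c, d, by simp [h1], by simp [h2]⟩

def cns {p : ℕ} (b : Bool) (t : QV p) : QV (p + 1) := ⟨b :: t.1, by simp [t.2]⟩

lemma cns_inj {p : ℕ} {b c : Bool} {t t' : QV p} (h : cns b t = cns c t') : b = c ∧ t = t' := by
  have := congrArg Subtype.val h
  simp only [cns, List.cons.injEq] at this
  exact ⟨this.1, Subtype.ext this.2⟩

lemma cns_adj {p : ℕ} {b : Bool} {t t' : QV p} :
    (QCube (p + 1)).Adj (cns b t) (cns b t') ↔ (QCube p).Adj t t' := by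
  simp only [qcube_adj, cns, diffOne_cons]
  constructor
  · rintro ⟨hne, h⟩
    refine ⟨fun hc => hne (by rw [hc]), ?_⟩
    rcases h with (⟨h1, h2, h3⟩ | ⟨_, h⟩) | (⟨h1, h2, h3⟩ | ⟨_, h⟩)
    · exact absurd (h1 ▸ h2) (by simp)
    · exact Or.inl h
    · exact absurd (h1 ▸ h2) (by simp)
    · exact Or.inr h
  · rintro ⟨hne, h⟩
    refine ⟨fun hc => hne (cns_inj hc).2, ?_⟩
    rcases h with h | h
    · exact Or.inl (Or.inr ⟨trivial, h⟩)
    · exact Or.inr (Or.inr ⟨trivial, h⟩)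

lemma cns_ne {p : ℕ} {t t' : QV p} : cns false t ≠ cns true t' := by
  intro h; exact absurd (cns_inj h).1 (by simp)

lemma cns_mixed_adj {p : ℕ} {t t' : QV p} :
    (QCube (p + 1)).Adj (cns false t) (cns true t') ↔ t = t' := by
  simp only [qcube_adj, cns, diffOne_cons]
  constructor
  · rintro ⟨hne, h⟩
    rcases h with (⟨_, _, h3⟩ | ⟨h, _⟩) | (⟨h1, _, _⟩ | ⟨h, _⟩)
    · exact Subtype.ext h3
    · simp at h
    · simp at h1
    · simp at h
  · rintro rfl
    exact ⟨cns_ne, Or.inl (Or.inl ⟨trivial, trivial, rfl⟩)⟩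

lemma qv_cases {p : ℕ} (u : QV (p + 1)) : ∃ b t, u = cns b t := by
  obtain ⟨l, hl⟩ := u
  cases l with
  | nil => simp at hl
  | cons b s =>
    have hs : s.length = p := by simpa using hl
    exact ⟨b, ⟨s, hs⟩, rfl⟩

def cnsHom {p : ℕ} (b : Bool) : QCube p →g QCube (p + 1) where
  toFun := cns b
  map_rel' := fun h => cns_adj.mpr h

lemma qcube_reachable : ∀ (p : ℕ) (u v : QV p), (QCube p).Reachable u v := by
  intro p
  induction p with
  | zero =>
    intro u v
    have : u = v := Subtype.ext (by
      rw [List.length_eq_zero_iff.mp u.2, List.length_eq_zero_iff.mp v.2])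
    exact this ▸ Reachable.refl u
  | succ p IH =>
    intro u v
    obtain ⟨b, t, rfl⟩ := qv_cases u
    obtain ⟨c, t', rfl⟩ := qv_cases v
    have h1 : (QCube (p+1)).Reachable (cns b t) (cns b t') := (IH t t').map (cnsHom b)
    have h2 : (QCube (p+1)).Reachable (cns b t') (cns c t') := by
      cases b <;> cases c
      · rfl
      · exact (cns_mixed_adj.mpr rfl).reachable
      · exact ((cns_mixed_adj.mpr rfl).reachable).symm
      · rfl
    exact h1.trans h2

lemma eq_of_reachable {V β : Type} {G : SimpleGraph V} {x : V → β}
    (h : ∀ a b, G.Adj a b → x a = x b) {u v : V} (hr : G.Reachable u v) : x u = x v := by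
  obtain ⟨w⟩ := hr
  induction w with
  | nil => rfl
  | cons h' _ ih => exact (h _ _ h').trans ih

end MC

section FaceLemma
open scoped symmDiff
open MC SimpleGraph

variable {α : Type} [DecidableEq α]

lemma symmDiff_singleton_not_mem {s : Finset α} {x : α} (h : x ∉ s) : s ∆ {x} = insert x s := by
  ext y
  simp only [Finset.mem_symmDiff, Finset.mem_singleton, Finset.mem_insert]
  constructor
  · rintro (⟨h1, h2⟩ | ⟨rfl, h2⟩)
    · exact Or.inr h1
    · exact Or.inl rfl
  · rintro (rfl | hy)
    · exact Or.inr ⟨rfl, h⟩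
    · exact Or.inl ⟨hy, fun hc => h (hc ▸ hy)⟩

lemma symmDiff_singleton_mem {s : Finset α} {x : α} (h : x ∈ s) : s ∆ {x} = s.erase x := by
  ext y
  simp only [Finset.mem_symmDiff, Finset.mem_singleton, Finset.mem_erase]
  constructor
  · rintro (⟨h1, h2⟩ | ⟨rfl, h2⟩)
    · exact ⟨fun hc => h2 hc, h1⟩
    · exact absurd h h2
  · rintro ⟨h1, h2⟩
    exact Or.inl ⟨h2, h1⟩

theorem faceLemma : ∀ (p : ℕ) (f : QV p → Finset α), Function.Injective f →
    (∀ u v, (QCube p).Adj u v ↔ (bigG α).Adj (f u) (f v)) →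
    ∃ A F : Finset α, Disjoint A F ∧ F.card = p ∧
      Set.range f = {B | A ⊆ B ∧ B ⊆ A ∪ F} := by
  intro p
  induction p with
  | zero =>
    intro f _ _
    refine ⟨f ⟨[], rfl⟩, ∅, Finset.disjoint_empty_right _, Finset.card_empty, ?_⟩
    ext B
    simp only [Set.mem_range, Set.mem_setOf_eq, Finset.union_empty]
    constructor
    · rintro ⟨u, rfl⟩
      have : u = ⟨[], rfl⟩ := Subtype.ext (List.length_eq_zero_iff.mp u.2)
      rw [this]
      exact ⟨subset_rfl, subset_rfl⟩
    · rintro ⟨h1, h2⟩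
      exact ⟨⟨[], rfl⟩, Finset.Subset.antisymm h1 h2⟩
  | succ p IH =>
    intro f hinj hadj
    set f0 : QV p → Finset α := fun t => f (cns false t) with hf0
    set f1 : QV p → Finset α := fun t => f (cns true t) with hf1
    have hinj0 : Function.Injective f0 := fun a b h => (cns_inj (hinj h)).2
    have hadj0 : ∀ u v, (QCube p).Adj u v ↔ (bigG α).Adj (f0 u) (f0 v) :=
      fun u v => (cns_adj (b := false)).symm.trans (hadj _ _)
    obtain ⟨A, F, hdisj, hcard, hrange⟩ := IH f0 hinj0 hadj0
    have hedge : ∀ t, ∃ x, f0 t ∆ f1 t = {x} := fun t =>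
      bigG_adj_symmDiff.mp ((hadj _ _).mp (cns_mixed_adj.mpr rfl))
    choose xm hxm using hedge
    have hf1eq : ∀ t, f1 t = f0 t ∆ {xm t} := by
      intro t
      rw [← hxm t, symmDiff_symmDiff_cancel_left]
    have hx_adj : ∀ t t', (QCube p).Adj t t' → xm t = xm t' := by
      intro t t' h
      by_contra hne
      obtain ⟨y, hy⟩ := bigG_adj_symmDiff.mp ((hadj0 t t').mp h)
      have hynet : y ≠ xm t := by
        rintro rfl
        have hb : f0 t' ∆ f1 t = ⊥ := by
          rw [hf1eq t, ← symmDiff_assoc, symmDiff_comm (f0 t') (f0 t), hy, symmDiff_self]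
        exact cns_ne (hinj (symmDiff_eq_bot.mp hb))
      have hynet' : y ≠ xm t' := by
        rintro rfl
        have hb : f0 t ∆ f1 t' = ⊥ := by
          rw [hf1eq t', ← symmDiff_assoc, hy, symmDiff_self]
        exact cns_ne (hinj (symmDiff_eq_bot.mp hb) : cns false t = cns true t')
      obtain ⟨y', hy'⟩ := bigG_adj_symmDiff.mp ((hadj _ _).mp ((cns_adj (b := true)).mpr h))
      have hsplit : f1 t ∆ f1 t' = {y} ∆ ({xm t} ∆ {xm t'}) := by
        rw [hf1eq t, hf1eq t', symmDiff_symmDiff_symmDiff_comm, hy]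
      have hmt : xm t ∈ f1 t ∆ f1 t' := by
        rw [hsplit, Finset.mem_symmDiff]
        refine Or.inr ⟨?_, ?_⟩
        · rw [Finset.mem_symmDiff]
          exact Or.inl ⟨Finset.mem_singleton_self _, fun hc => hne (Finset.mem_singleton.mp hc)⟩
        · intro hc
          exact hynet (Finset.mem_singleton.mp hc).symm
      have hmt' : xm t' ∈ f1 t ∆ f1 t' := by
        rw [hsplit, Finset.mem_symmDiff]
        refine Or.inr ⟨?_, ?_⟩
        · rw [Finset.mem_symmDiff]
          exact Or.inr ⟨Finset.mem_singleton_self _, fun hc => hne (Finset.mem_singleton.mp hc).symm⟩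
        · intro hc
          exact hynet' (Finset.mem_singleton.mp hc).symm
      rw [hy', Finset.mem_singleton] at hmt hmt'
      exact hne (hmt.trans hmt'.symm)
    have hxconst : ∀ t t', xm t = xm t' := fun t t' =>
      eq_of_reachable hx_adj (qcube_reachable p t t')
    obtain ⟨tb, htb⟩ : ∃ t, f0 t = A := by
      have : A ∈ {B | A ⊆ B ∧ B ⊆ A ∪ F} := ⟨subset_rfl, Finset.subset_union_left⟩
      rw [← hrange] at this
      exact this
    set xs := xm tb with hxs
    have hf1x : ∀ t, f1 t = f0 t ∆ {xs} := fun t => (hf1eq t).trans (by rw [hxconst t tb])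
    have hrange0 : ∀ t, A ⊆ f0 t ∧ f0 t ⊆ A ∪ F := fun t => by
      have : f0 t ∈ Set.range f0 := ⟨t, rfl⟩
      rwa [hrange] at this
    have hxsF : xs ∉ F := by
      intro hxF
      have hxA : xs ∉ A := fun h => (Finset.disjoint_left.mp hdisj h) hxF
      have h1 : f1 tb = insert xs A := by
        rw [hf1x, htb, symmDiff_singleton_not_mem hxA]
      have h2 : insert xs A ∈ Set.range f0 := by
        rw [hrange]
        exact ⟨Finset.subset_insert _ _,
          Finset.insert_subset (Finset.mem_union_right _ hxF) Finset.subset_union_left⟩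
      obtain ⟨t1, ht1⟩ := h2
      exact cns_ne (hinj (ht1.trans h1.symm) : cns false t1 = cns true tb)
    have hrangesplit : Set.range f = Set.range f0 ∪ Set.range f1 := by
      ext B
      constructor
      · rintro ⟨u, rfl⟩
        obtain ⟨b, t, rfl⟩ := qv_cases u
        cases b
        · exact Or.inl ⟨t, rfl⟩
        · exact Or.inr ⟨t, rfl⟩
      · rintro (⟨t, rfl⟩ | ⟨t, rfl⟩)
        · exact ⟨cns false t, rfl⟩
        · exact ⟨cns true t, rfl⟩
    by_cases hxA : xs ∈ A
    · refine ⟨A.erase xs, insert xs F, ?_, ?_, ?_⟩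
      · rw [Finset.disjoint_insert_right]
        exact ⟨Finset.notMem_erase _ _, Finset.disjoint_of_subset_left (Finset.erase_subset _ _) hdisj⟩
      · rw [Finset.card_insert_of_notMem hxsF, hcard]
      · rw [hrangesplit]
        have hsub : A ∪ F ⊆ A.erase xs ∪ insert xs F := by
          intro y hy
          by_cases hyx : y = xs
          · exact Finset.mem_union_right _ (hyx ▸ Finset.mem_insert_self _ _)
          · rcases Finset.mem_union.mp hy with h | h
            · exact Finset.mem_union_left _ (Finset.mem_erase.mpr ⟨hyx, h⟩)
            · exact Finset.mem_union_right _ (Finset.mem_insert_of_mem h)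
        ext B
        simp only [Set.mem_union, Set.mem_setOf_eq, Set.mem_range]
        constructor
        · rintro (⟨t, rfl⟩ | ⟨t, rfl⟩)
          · exact ⟨(Finset.erase_subset _ _).trans (hrange0 t).1, (hrange0 t).2.trans hsub⟩
          · rw [hf1x t, symmDiff_singleton_mem ((hrange0 t).1 hxA)]
            exact ⟨Finset.erase_subset_erase _ (hrange0 t).1,
              ((Finset.erase_subset _ _).trans (hrange0 t).2).trans hsub⟩
        · rintro ⟨h1, h2⟩
          by_cases hxB : xs ∈ B
          · left
            have hAB : A ⊆ B := by
              intro y hy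
              by_cases hyx : y = xs
              · exact hyx ▸ hxB
              · exact h1 (Finset.mem_erase.mpr ⟨hyx, hy⟩)
            have hBAF : B ⊆ A ∪ F := by
              intro y hy
              rcases Finset.mem_union.mp (h2 hy) with h | h
              · exact Finset.mem_union_left _ (Finset.mem_of_mem_erase h)
              · rcases Finset.mem_insert.mp h with rfl | h
                · exact Finset.mem_union_left _ hxA
                · exact Finset.mem_union_right _ h
            have : B ∈ Set.range f0 := by rw [hrange]; exact ⟨hAB, hBAF⟩
            exact this
          · right
            have h2' : insert xs B ∈ Set.range f0 := by
              rw [hrange]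
              constructor
              · intro y hy
                by_cases hyx : y = xs
                · exact hyx ▸ Finset.mem_insert_self _ _
                · exact Finset.mem_insert_of_mem (h1 (Finset.mem_erase.mpr ⟨hyx, hy⟩))
              · apply Finset.insert_subset (Finset.mem_union_left _ hxA)
                intro y hy
                rcases Finset.mem_union.mp (h2 hy) with h | h
                · exact Finset.mem_union_left _ (Finset.mem_of_mem_erase h)
                · rcases Finset.mem_insert.mp h with rfl | h
                  · exact absurd hy hxB
                  · exact Finset.mem_union_right _ h
            obtain ⟨t, ht⟩ := h2'
            refine ⟨t, ?_⟩
            rw [hf1x t, ht, symmDiff_singleton_mem (Finset.mem_insert_self _ _),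
              Finset.erase_insert hxB]
    · -- xs ∉ A (and xs ∉ F)
      have hxAF : xs ∉ A ∪ F := fun h => by
        rcases Finset.mem_union.mp h with h | h
        · exact hxA h
        · exact hxsF h
      refine ⟨A, insert xs F, ?_, ?_, ?_⟩
      · rw [Finset.disjoint_insert_right]
        exact ⟨hxA, hdisj⟩
      · rw [Finset.card_insert_of_notMem hxsF, hcard]
      · rw [hrangesplit]
        ext B
        simp only [Set.mem_union, Set.mem_setOf_eq, Set.mem_range]
        have hins : A ∪ insert xs F = insert xs (A ∪ F) := by
          ext y
          simp only [Finset.mem_union, Finset.mem_insert]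
          tauto
        constructor
        · rintro (⟨t, rfl⟩ | ⟨t, rfl⟩)
          · exact ⟨(hrange0 t).1, (hrange0 t).2.trans (by rw [hins]; exact Finset.subset_insert _ _)⟩
          · rw [hf1x t, symmDiff_singleton_not_mem (fun h => hxAF ((hrange0 t).2 h))]
            refine ⟨(hrange0 t).1.trans (Finset.subset_insert _ _), ?_⟩
            rw [hins]
            exact Finset.insert_subset_insert _ (hrange0 t).2
        · rintro ⟨h1, h2⟩
          by_cases hxB : xs ∈ B
          · right
            have hB' : B.erase xs ∈ Set.range f0 := by
              rw [hrange]
              constructor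
              · intro y hy
                exact Finset.mem_erase.mpr ⟨fun hc => hxA (hc ▸ hy), h1 hy⟩
              · intro y hy
                obtain ⟨hyx, hyB⟩ := Finset.mem_erase.mp hy
                rcases Finset.mem_insert.mp (hins ▸ h2 hyB) with rfl | h
                · exact absurd rfl hyx
                · exact h
            obtain ⟨t, ht⟩ := hB'
            refine ⟨t, ?_⟩
            rw [hf1x t, ht, symmDiff_singleton_not_mem (Finset.notMem_erase _ _),
              Finset.insert_erase hxB]
          · left
            have : B ∈ Set.range f0 := by
              rw [hrange]
              refine ⟨h1, fun y hy => ?_⟩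
              rcases Finset.mem_insert.mp (hins ▸ h2 hy) with rfl | h
              · exact absurd hy hxB
              · exact h
            exact this

end FaceLemma
section PartC
open scoped symmDiff
open MC SimpleGraph

variable {α : Type} [DecidableEq α]

def chi (l : List α) (C : Finset α) : List Bool := l.map (fun y => decide (y ∈ C))

lemma chi_diffOne_mpr {l : List α} {C : Finset α} {x : α} (hx : x ∉ C) (hxl : x ∈ l)
    (hnd : l.Nodup) : diffOne (chi l C) (chi l (insert x C)) := by
  induction l with
  | nil => simp at hxl
  | cons y l' IH =>
    by_cases hxy : y = x
    · subst hxy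
      have hyl' : y ∉ l' := (List.nodup_cons.mp hnd).1
      have htails : chi l' (insert y C) = chi l' C := by
        apply List.map_eq_map_iff.mpr
        intro z hz
        have hzy : z ≠ y := fun hc => hyl' (hc ▸ hz)
        simp [decide_eq_decide, Finset.mem_insert, hzy]
      refine ⟨[], chi l' C, ?_, ?_⟩
      · show decide (y ∈ C) :: chi l' C = [] ++ false :: chi l' C
        rw [List.nil_append, decide_eq_false hx]
      · show decide (y ∈ insert y C) :: chi l' (insert y C) = [] ++ true :: chi l' C
        rw [List.nil_append, htails, decide_eq_true (Finset.mem_insert_self y C)]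
    · have hxl' : x ∈ l' := by
        rcases List.mem_cons.mp hxl with h | h
        · exact absurd h.symm hxy
        · exact h
      have hhead : decide (y ∈ insert x C) = decide (y ∈ C) := by
        simp [Finset.mem_insert, hxy]
      have := IH hxl' (List.nodup_cons.mp hnd).2
      obtain ⟨a, b, h1, h2⟩ := this
      refine ⟨decide (y ∈ C) :: a, b, ?_, ?_⟩
      · show decide (y ∈ C) :: chi l' C = (decide (y ∈ C) :: a) ++ false :: b
        rw [List.cons_append, h1]
      · show decide (y ∈ insert x C) :: chi l' (insert x C) = (decide (y ∈ C) :: a) ++ true :: b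
        rw [List.cons_append, h2, hhead]

lemma chi_diffOne_mp {l : List α} {C C' : Finset α}
    (hnd : l.Nodup) (hC : ∀ y ∈ C, y ∈ l) (hC' : ∀ y ∈ C', y ∈ l)
    (h : diffOne (chi l C) (chi l C')) : ∃ x, x ∉ C ∧ C' = insert x C := by
  induction l generalizing C C' with
  | nil =>
    obtain ⟨a, b, h1, h2⟩ := h
    exact absurd h1 (by simp [chi])
  | cons y l' IH =>
    have hnd' := (List.nodup_cons.mp hnd).2
    have hyl' := (List.nodup_cons.mp hnd).1
    have hcons : chi (y :: l') C = decide (y ∈ C) :: chi l' C := rfl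
    rw [hcons, show chi (y :: l') C' = decide (y ∈ C') :: chi l' C' from rfl] at h
    rcases diffOne_cons.mp h with ⟨h1, h2, h3⟩ | ⟨h1, h2⟩
    · -- y ∉ C, y ∈ C', tails equal
      have hyC : y ∉ C := by simpa using h1
      have hyC' : y ∈ C' := by simpa using h2
      have hpt : ∀ z ∈ l', (z ∈ C ↔ z ∈ C') := by
        intro z hz
        have := List.map_eq_map_iff.mp h3 z hz
        simpa using this
      refine ⟨y, hyC, ?_⟩
      ext z
      rw [Finset.mem_insert]
      constructor
      · intro hz
        by_cases hzy : z = y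
        · exact Or.inl hzy
        · right
          have hzl : z ∈ l' := by
            rcases List.mem_cons.mp (hC' z hz) with h | h
            · exact absurd h hzy
            · exact h
          exact (hpt z hzl).mpr hz
      · rintro (rfl | hz)
        · exact hyC'
        · have hzy : z ≠ y := fun hc => hyC (hc ▸ hz)
          have hzl : z ∈ l' := by
            rcases List.mem_cons.mp (hC z hz) with h | h
            · exact absurd h hzy
            · exact h
          exact (hpt z hzl).mp hz
    · -- heads equal, diffOne on tails
      have hyCC' : y ∈ C ↔ y ∈ C' := by
        have h1' : decide (y ∈ C) = decide (y ∈ C') := h1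
        simpa [decide_eq_decide] using h1'
      have e1 : chi l' C = chi l' (C.erase y) := by
        apply List.map_eq_map_iff.mpr
        intro z hz
        have : z ≠ y := fun hc => hyl' (hc ▸ hz)
        simp [Finset.mem_erase, this]
      have e2 : chi l' C' = chi l' (C'.erase y) := by
        apply List.map_eq_map_iff.mpr
        intro z hz
        have : z ≠ y := fun hc => hyl' (hc ▸ hz)
        simp [Finset.mem_erase, this]
      rw [e1, e2] at h2
      obtain ⟨x, hx, hins⟩ := IH hnd'
        (fun z hz => by
          have hzy : z ≠ y := (Finset.mem_erase.mp hz).1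
          rcases List.mem_cons.mp (hC z (Finset.mem_of_mem_erase hz)) with h | h
          · exact absurd h hzy
          · exact h)
        (fun z hz => by
          have hzy : z ≠ y := (Finset.mem_erase.mp hz).1
          rcases List.mem_cons.mp (hC' z (Finset.mem_of_mem_erase hz)) with h | h
          · exact absurd h hzy
          · exact h) h2
      have hxy : x ≠ y := by
        have : x ∈ C'.erase y := hins ▸ Finset.mem_insert_self x _
        exact (Finset.mem_erase.mp this).1
      refine ⟨x, ?_, ?_⟩
      · intro hxC
        exact hx (Finset.mem_erase.mpr ⟨hxy, hxC⟩)
      · ext z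
        rw [Finset.mem_insert]
        by_cases hzy : z = y
        · subst hzy
          constructor
          · intro hz; exact Or.inr (hyCC'.mpr hz)
          · rintro (rfl | hz)
            · exact absurd rfl hxy
            · exact hyCC'.mp hz
        · constructor
          · intro hz
            have : z ∈ C'.erase y := Finset.mem_erase.mpr ⟨hzy, hz⟩
            rw [hins, Finset.mem_insert] at this
            rcases this with rfl | hz'
            · exact Or.inl rfl
            · exact Or.inr (Finset.mem_of_mem_erase hz')
          · rintro (rfl | hz)
            · have : z ∈ C'.erase y := hins ▸ Finset.mem_insert_self z _
              exact Finset.mem_of_mem_erase this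
            · have : z ∈ C'.erase y := by
                rw [hins, Finset.mem_insert]
                exact Or.inr (Finset.mem_erase.mpr ⟨hzy, hz⟩)
              exact Finset.mem_of_mem_erase this

lemma chi_inj {l : List α} {C C' : Finset α} (hC : ∀ y ∈ C, y ∈ l) (hC' : ∀ y ∈ C', y ∈ l)
    (h : chi l C = chi l C') : C = C' := by
  have hpt := List.map_eq_map_iff.mp h
  ext z
  constructor
  · intro hz
    have := hpt z (hC z hz)
    simp only [decide_eq_decide] at this
    exact this.mp hz
  · intro hz
    have := hpt z (hC' z hz)
    simp only [decide_eq_decide] at this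
    exact this.mpr hz

lemma interval_cube (𝒜 : Set (Finset α)) (B : Finset α) (hP : ∀ C ⊆ B, C ∈ 𝒜) :
    Nonempty (((bigG α).induce 𝒜).induce {C : ↥𝒜 | C.1 ⊆ B} ≃g QCube B.card) := by
  classical
  set l := B.toList with hl
  have hlen : l.length = B.card := Finset.length_toList B
  have hnd : l.Nodup := Finset.nodup_toList B
  have hmem : ∀ y, y ∈ l ↔ y ∈ B := fun y => Finset.mem_toList
  haveI : Fintype {C : Finset α // C ⊆ B} :=
    Fintype.ofEquiv ↥(B.powerset)
      (Equiv.subtypeEquivRight (fun C => Finset.mem_powerset))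
  have hcards : Fintype.card {C : Finset α // C ⊆ B} = 2 ^ B.card := by
    have h1 : Fintype.card ↥(B.powerset) = Fintype.card {C : Finset α // C ⊆ B} :=
      Fintype.card_congr (Equiv.subtypeEquivRight (fun C => Finset.mem_powerset))
    rw [← h1, Fintype.card_coe, Finset.card_powerset]
  set toQ : {C : Finset α // C ⊆ B} → QV B.card :=
    fun C => ⟨chi l C.1, by rw [chi, List.length_map, hlen]⟩ with htoQ
  have hinj : Function.Injective toQ := by
    intro C C' h
    apply Subtype.ext
    exact chi_inj (fun y hy => (hmem y).mpr (C.2 hy)) (fun y hy => (hmem y).mpr (C'.2 hy))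
      (congrArg Subtype.val h)
  have hbij : Function.Bijective toQ :=
    (Fintype.bijective_iff_injective_and_card toQ).mpr ⟨hinj, by rw [hcards, card_QV]⟩
  set e1 : {C : Finset α // C ⊆ B} ≃ QV B.card := Equiv.ofBijective toQ hbij with he1
  set e0 : ↥{C : ↥𝒜 | C.1 ⊆ B} ≃ {C : Finset α // C ⊆ B} :=
    { toFun := fun x => ⟨x.1.1, x.2⟩
      invFun := fun c => ⟨⟨c.1, hP c.1 c.2⟩, c.2⟩
      left_inv := fun x => by apply Subtype.ext; apply Subtype.ext; rfl
      right_inv := fun c => rfl } with he0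
  have hdiff : ∀ (C C' : Finset α), C ⊆ B → C' ⊆ B →
      (diffOne (chi l C) (chi l C') ↔ insRel C C') := by
    intro C C' h1 h2
    constructor
    · intro h
      obtain ⟨x, hx1, hx2⟩ := chi_diffOne_mp hnd (fun y hy => (hmem y).mpr (h1 hy))
        (fun y hy => (hmem y).mpr (h2 hy)) h
      exact ⟨x, hx1, hx2⟩
    · rintro ⟨x, hx, rfl⟩
      exact chi_diffOne_mpr hx ((hmem x).mpr (h2 (Finset.mem_insert_self x C))) hnd
  refine ⟨{ toEquiv := e0.trans e1, map_rel_iff' := ?_ }⟩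
  intro x y
  show (QCube B.card).Adj (toQ (e0 x)) (toQ (e0 y)) ↔ _
  have hradj : (((bigG α).induce 𝒜).induce {C : ↥𝒜 | C.1 ⊆ B}).Adj x y ↔
      (bigG α).Adj x.1.1 y.1.1 := by
    simp [SimpleGraph.induce, SimpleGraph.comap_adj]
  rw [hradj, qcube_adj, bigG_adj]
  have hx1 : x.1.1 ⊆ B := x.2
  have hy1 : y.1.1 ⊆ B := y.2
  constructor
  · rintro ⟨hne, h | h⟩
    · exact Or.inl ((hdiff _ _ hx1 hy1).mp h)
    · exact Or.inr ((hdiff _ _ hy1 hx1).mp h)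
  · intro h
    have hne : x.1.1 ≠ y.1.1 := by
      rintro hc
      rcases h with ⟨z, hz, hzz⟩ | ⟨z, hz, hzz⟩
      · exact hz (by rw [hc] at hzz ⊢; exact hzz ▸ Finset.mem_insert_self z _)
      · exact hz (by rw [← hc] at hzz ⊢; exact hzz ▸ Finset.mem_insert_self z _)
    refine ⟨?_, ?_⟩
    · intro hc
      apply hne
      have := congrArg (fun q => (e0.symm (e1.symm q)).1.1) hc
      exact congrArg (fun w => (w : {C : Finset α // C ⊆ B}).1)
        (hinj (Subtype.ext (congrArg Subtype.val hc)))
    · rcases h with h | h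
      · exact Or.inl ((hdiff _ _ hx1 hy1).mpr h)
      · exact Or.inr ((hdiff _ _ hy1 hx1).mpr h)

end PartC
section PartD
open MC SimpleGraph

variable {α : Type} [DecidableEq α]

lemma induce_induce_adj (𝒜 : Set (Finset α)) (S : Set ↥𝒜) (x y : ↥S) :
    (((bigG α).induce 𝒜).induce S).Adj x y ↔ (bigG α).Adj x.1.1 y.1.1 := by
  simp [SimpleGraph.induce, SimpleGraph.comap_adj]

lemma classification (𝒜 : Set (Finset α)) (hdown : ∀ B ∈ 𝒜, ∀ C ⊆ B, C ∈ 𝒜) (p : ℕ) :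
    {S : Set ↥𝒜 | Nonempty (((bigG α).induce 𝒜).induce S ≃g QCube p) ∧
      ∀ T, S ⊆ T → (∃ q, Nonempty (((bigG α).induce 𝒜).induce T ≃g QCube q)) → T = S}
    = (fun B => {C : ↥𝒜 | C.1 ⊆ B}) ''
        {B | B ∈ 𝒜 ∧ B.card = p ∧ ∀ B' ∈ 𝒜, B ⊆ B' → B' = B} := by
  ext S
  simp only [Set.mem_setOf_eq, Set.mem_image]
  constructor
  · rintro ⟨⟨φ⟩, hmax⟩
    set f : QV p → Finset α := fun q => ((φ.symm q : ↥S) : ↥𝒜).1 with hf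
    have hinjf : Function.Injective f := by
      intro u v h
      apply φ.symm.injective
      apply Subtype.ext; apply Subtype.ext; exact h
    have hadjf : ∀ u v, (QCube p).Adj u v ↔ (bigG α).Adj (f u) (f v) := by
      intro u v
      rw [← φ.symm.map_rel_iff]
      exact (induce_induce_adj 𝒜 S _ _)
    obtain ⟨A, F, hdisj, hcard, hrange⟩ := faceLemma p f hinjf hadjf
    have hmemW : ∀ x : ↥𝒜, x ∈ S → (A ⊆ x.1 ∧ x.1 ⊆ A ∪ F) := by
      intro x hx
      have : x.1 ∈ Set.range f := ⟨φ ⟨x, hx⟩, by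
        simp only [hf]
        congr 1
        exact congrArg Subtype.val (φ.symm_apply_apply ⟨x, hx⟩)⟩
      rwa [hrange] at this
    have hsurjW : ∀ B : Finset α, A ⊆ B → B ⊆ A ∪ F → ∃ x : ↥𝒜, x ∈ S ∧ x.1 = B := by
      intro B h1 h2
      have : B ∈ Set.range f := by rw [hrange]; exact ⟨h1, h2⟩
      obtain ⟨u, hu⟩ := this
      exact ⟨(φ.symm u : ↥S).1, (φ.symm u : ↥S).2, hu⟩
    obtain ⟨xT, hxT, hxTval⟩ := hsurjW (A ∪ F) Finset.subset_union_left subset_rfl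
    have hAF𝒜 : A ∪ F ∈ 𝒜 := hxTval ▸ xT.2
    -- the saturated superset over A ∪ F
    have hTmax : ∀ (B : Finset α), B ∈ 𝒜 → A ∪ F ⊆ B →
        ({C : ↥𝒜 | C.1 ⊆ B} : Set ↥𝒜) = S := by
      intro B hB hsub
      apply hmax
      · intro x hx
        exact Set.mem_setOf_eq ▸ ((hmemW x hx).2.trans hsub)
      · exact ⟨B.card, interval_cube 𝒜 B (fun C hC => hdown B hB C hC)⟩
    have hS1 : ({C : ↥𝒜 | C.1 ⊆ A ∪ F} : Set ↥𝒜) = S := hTmax _ hAF𝒜 subset_rfl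
    -- A = ∅
    have hA : A = ∅ := by
      have hEmp : (⟨∅, hdown _ hAF𝒜 ∅ (Finset.empty_subset _)⟩ : ↥𝒜) ∈ S := by
        rw [← hS1]; show (∅ : Finset α) ⊆ A ∪ F; exact Finset.empty_subset _
      have := (hmemW _ hEmp).1
      exact Finset.subset_empty.mp this
    subst hA
    rw [Finset.empty_union] at hS1 hAF𝒜 hTmax
    refine ⟨F, ⟨hAF𝒜, hcard, ?_⟩, ?_⟩
    · intro B' hB' hsub
      have hT' := hTmax B' hB' hsub
      have : (⟨B', hB'⟩ : ↥𝒜) ∈ S := by rw [← hT']; show B' ⊆ B'; exact subset_rfl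
      have h2 := (hmemW _ this).2
      rw [Finset.empty_union] at h2
      exact Finset.Subset.antisymm h2 hsub
    · exact hS1
  · rintro ⟨B, ⟨hB𝒜, hBcard, hBmax⟩, rfl⟩
    constructor
    · rw [← hBcard]
      exact interval_cube 𝒜 B (fun C hC => hdown B hB𝒜 C hC)
    · rintro T hST ⟨q, ⟨ψ⟩⟩
      set g : QV q → Finset α := fun u => ((ψ.symm u : ↥T) : ↥𝒜).1 with hg
      have hinjg : Function.Injective g := by
        intro u v h
        apply ψ.symm.injective
        apply Subtype.ext; apply Subtype.ext; exact h
      have hadjg : ∀ u v, (QCube q).Adj u v ↔ (bigG α).Adj (g u) (g v) := by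
        intro u v
        rw [← ψ.symm.map_rel_iff]
        exact (induce_induce_adj 𝒜 T _ _)
      obtain ⟨A', F', hdisj', hcard', hrange'⟩ := faceLemma q g hinjg hadjg
      have hmemW : ∀ x : ↥𝒜, x ∈ T → (A' ⊆ x.1 ∧ x.1 ⊆ A' ∪ F') := by
        intro x hx
        have : x.1 ∈ Set.range g := ⟨ψ ⟨x, hx⟩, by
          simp only [hg]
          congr 1
          exact congrArg Subtype.val (ψ.symm_apply_apply ⟨x, hx⟩)⟩
        rwa [hrange'] at this
      have hsurjW : ∀ C : Finset α, A' ⊆ C → C ⊆ A' ∪ F' → ∃ x : ↥𝒜, x ∈ T ∧ x.1 = C := by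
        intro C h1 h2
        have : C ∈ Set.range g := by rw [hrange']; exact ⟨h1, h2⟩
        obtain ⟨u, hu⟩ := this
        exact ⟨(ψ.symm u : ↥T).1, (ψ.symm u : ↥T).2, hu⟩
      -- ∅ ∈ S ⊆ T
      have hEmpS : (⟨∅, hdown _ hB𝒜 ∅ (Finset.empty_subset _)⟩ : ↥𝒜) ∈
          {C : ↥𝒜 | C.1 ⊆ B} := show (∅ : Finset α) ⊆ B from Finset.empty_subset _
      have hA' : A' = ∅ :=
        Finset.subset_empty.mp (hmemW _ (hST hEmpS)).1
      subst hA'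
      -- B ∈ T hence B ⊆ F'
      have hBS : (⟨B, hB𝒜⟩ : ↥𝒜) ∈ {C : ↥𝒜 | C.1 ⊆ B} := show B ⊆ B from subset_rfl
      have hBF' : B ⊆ F' := by
        have := (hmemW _ (hST hBS)).2
        rwa [Finset.empty_union] at this
      -- F' ∈ 𝒜 and so F' = B
      obtain ⟨xF, hxF, hxFval⟩ := hsurjW F' (Finset.empty_subset _)
        (by rw [Finset.empty_union])
      have hF𝒜 : F' ∈ 𝒜 := hxFval ▸ xF.2
      have hFB : F' = B := hBmax F' hF𝒜 hBF'
      -- T = S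
      apply Set.Subset.antisymm
      · intro x hx
        have := (hmemW x hx).2
        rw [Finset.empty_union, hFB] at this
        exact this
      · exact hST

lemma maxCubeCount_congr {V W : Type} {G : SimpleGraph V} {H : SimpleGraph W}
    (e : G ≃g H) (p : ℕ) : maxCubeCount G p = maxCubeCount H p := by
  have key : ∀ (S : Set V) (q : ℕ),
      Nonempty (G.induce S ≃g QCube q) ↔ Nonempty (H.induce (e '' S) ≃g QCube q) := by
    intro S q
    have iso0 : G.induce S ≃g H.induce (e '' S) := by
      refine { toEquiv := e.toEquiv.image S, map_rel_iff' := ?_ }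
      intro x y
      show H.Adj (e x.1) (e y.1) ↔ G.Adj x.1 y.1
      exact e.map_rel_iff
    exact ⟨fun ⟨φ⟩ => ⟨iso0.symm.trans φ⟩, fun ⟨φ⟩ => ⟨iso0.trans φ⟩⟩
  have himg : ∀ T : Set W, e '' (e.symm '' T) = T := by
    intro T
    rw [← Set.image_comp]
    simp [Function.comp_def]
  have himg' : ∀ S : Set V, e.symm '' (e '' S) = S := by
    intro S
    rw [← Set.image_comp]
    simp [Function.comp_def]
  have hcoll : {T : Set W | Nonempty (H.induce T ≃g QCube p) ∧
      ∀ T' : Set W, T ⊆ T' → (∃ q, Nonempty (H.induce T' ≃g QCube q)) → T' = T}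
      = (fun S : Set V => e '' S) '' {S : Set V | Nonempty (G.induce S ≃g QCube p) ∧
      ∀ T : Set V, S ⊆ T → (∃ q, Nonempty (G.induce T ≃g QCube q)) → T = S} := by
    ext T
    simp only [Set.mem_setOf_eq, Set.mem_image]
    constructor
    · rintro ⟨hcube, hmaxT⟩
      refine ⟨e.symm '' T, ⟨?_, ?_⟩, himg T⟩
      · rw [key _ p, himg T]; exact hcube
      · intro T' hsub ⟨q, hq⟩
        have h1 : T ⊆ e '' T' := by
          intro w hw
          have : e.symm w ∈ T' := hsub ⟨w, hw, rfl⟩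
          exact ⟨e.symm w, this, e.apply_symm_apply w⟩
        have h2 : ∃ q', Nonempty (H.induce (e '' T') ≃g QCube q') := ⟨q, (key T' q).mp hq⟩
        have := hmaxT (e '' T') h1 h2
        rw [← this, himg']
    · rintro ⟨S, ⟨hcube, hmaxS⟩, rfl⟩
      refine ⟨(key S p).mp hcube, ?_⟩
      intro T' hsub ⟨q, hq⟩
      have h1 : S ⊆ e.symm '' T' := by
        intro v hv
        exact ⟨e v, hsub ⟨v, hv, rfl⟩, e.symm_apply_apply v⟩
      have h2 : ∃ q', Nonempty (G.induce (e.symm '' T') ≃g QCube q') := by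
        refine ⟨q, ?_⟩
        have := (key (e.symm '' T') q)
        rw [himg T'] at this
        exact this.mpr hq
      have := hmaxS (e.symm '' T') h1 h2
      rw [← this, himg]
  unfold maxCubeCount
  rw [hcoll, Set.ncard_image_of_injective _ (Set.image_injective.mpr e.injective)]

end PartD
section PartE
open MC

abbrev EE := ℕ × ℕ

def shf (m : ℕ) (A : Finset EE) : Finset EE := A.image (fun e => (e.1 + m, e.2))

lemma mem_shf_add {m : ℕ} {A : Finset EE} {j c : ℕ} : (j + m, c) ∈ shf m A ↔ (j, c) ∈ A := by
  simp only [shf, Finset.mem_image]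
  constructor
  · rintro ⟨e, he, heq⟩
    obtain ⟨h1, h2⟩ := Prod.mk.injEq .. ▸ heq
    have : e.1 = j := by omega
    rw [← this, ← h2]
    exact he
  · intro h
    exact ⟨(j, c), h, rfl⟩

lemma mem_shf {m : ℕ} {A : Finset EE} {x : EE} :
    x ∈ shf m A ↔ ∃ e ∈ A, x = (e.1 + m, e.2) := by
  simp only [shf, Finset.mem_image]
  constructor
  · rintro ⟨e, he, heq⟩; exact ⟨e, he, heq.symm⟩
  · rintro ⟨e, he, heq⟩; exact ⟨e, he, heq.symm⟩

lemma not_mem_shf_zero {m : ℕ} {A : Finset EE} {c : ℕ} : ((0 : ℕ), c) ∉ shf (m + 1) A := by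
  rw [mem_shf]
  rintro ⟨e, _, heq⟩
  have := congrArg Prod.fst heq
  simp only at this
  omega

lemma shf_insert {m : ℕ} {A : Finset EE} {x : EE} :
    shf m (insert x A) = insert (x.1 + m, x.2) (shf m A) := Finset.image_insert _ _ _

lemma shf_injective (m : ℕ) : Function.Injective (shf m) := by
  intro A B h
  ext ⟨j, c⟩
  constructor
  · intro hj
    have : (j + m, c) ∈ shf m B := h ▸ mem_shf_add.mpr hj
    exact mem_shf_add.mp this
  · intro hj
    have : (j + m, c) ∈ shf m A := h.symm ▸ mem_shf_add.mpr hj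
    exact mem_shf_add.mp this

lemma shf_shf {A : Finset EE} : shf 1 (shf 1 A) = shf 2 A := by
  rw [shf, shf, shf, Finset.image_image]
  rfl

lemma shf_erase {m : ℕ} {A : Finset EE} {y : EE} :
    shf m (A.erase y) = (shf m A).erase (y.1 + m, y.2) := by
  ext x
  rw [mem_shf, Finset.mem_erase, mem_shf]
  constructor
  · rintro ⟨e, he, heq⟩
    obtain ⟨hey, heA⟩ := Finset.mem_erase.mp he
    refine ⟨?_, e, heA, heq⟩
    rw [heq]
    intro hc
    rw [Prod.ext_iff] at hc
    simp only at hc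
    exact hey (Prod.ext (by omega) hc.2)
  · rintro ⟨hne, e, heA, heq⟩
    refine ⟨e, Finset.mem_erase.mpr ⟨?_, heA⟩, heq⟩
    rintro rfl
    exact hne heq

def code (k : ℕ) : List ℕ → Finset EE
  | [] => ∅
  | i :: s =>
    if i = k then insert (0, k) (shf 2 (code k s.tail))
    else if i = 0 then shf 1 (code k s)
    else insert (0, i) (shf 1 (code k s))
termination_by l => l.length
decreasing_by
  · simp only [List.length_cons, List.length_tail]; omega
  · simp only [List.length_cons]; omega
  · simp only [List.length_cons]; omega

lemma code_nil (k : ℕ) : code k [] = ∅ := by rw [code]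

lemma code_cons_k (k : ℕ) (s : List ℕ) :
    code k (k :: s) = insert (0, k) (shf 2 (code k s.tail)) := by
  rw [code]; simp

lemma code_cons_zero {k : ℕ} (hk0 : k ≠ 0) (s : List ℕ) :
    code k (0 :: s) = shf 1 (code k s) := by
  rw [code]; simp [Ne.symm hk0]

lemma code_cons_pos {k i : ℕ} (hi0 : i ≠ 0) (hik : i ≠ k) (s : List ℕ) :
    code k (i :: s) = insert (0, i) (shf 1 (code k s)) := by
  rw [code]; simp [hi0, hik]

lemma pell_tail {k i : ℕ} {s : List ℕ} (h : GenPell k (i :: s)) (hik : i ≠ k) :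
    i < k ∧ GenPell k s := by
  cases h with
  | cons _ _ h1 h2 => exact ⟨h1, h2⟩
  | kk _ _ => exact absurd rfl hik

lemma pell_kk {k : ℕ} {s : List ℕ} (h : GenPell k (k :: s)) :
    ∃ t, s = k :: t ∧ GenPell k t := by
  cases h with
  | cons _ _ h1 _ => exact absurd h1 (Nat.lt_irrefl k)
  | kk t ht => exact ⟨t, rfl, ht⟩

lemma zero_mem_code {k : ℕ} (hk0 : k ≠ 0) {u : List ℕ} {c : ℕ} :
    ((0 : ℕ), c) ∈ code k u ↔
      (∃ s, u = c :: s ∧ c ≠ 0 ∧ c ≠ k) ∨ (c = k ∧ ∃ s, u = k :: s) := by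
  cases u with
  | nil => simp [code_nil]
  | cons i s =>
    by_cases hik : i = k
    · subst hik
      rw [code_cons_k]
      simp only [Finset.mem_insert]
      constructor
      · rintro (h | h)
        · obtain ⟨-, h2⟩ := Prod.mk.injEq .. ▸ h
          exact Or.inr ⟨h2, s, rfl⟩
        · exact absurd h (not_mem_shf_zero (m := 1))
      · rintro (⟨t, ht, hc0, hck⟩ | ⟨rfl, t, ht⟩)
        · obtain ⟨h1, -⟩ := List.cons.injEq .. ▸ ht
          exact absurd h1.symm hck
        · exact Or.inl rfl
    · by_cases hi0 : i = 0
      · subst hi0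
        rw [code_cons_zero hk0]
        constructor
        · intro h; exact absurd h (not_mem_shf_zero (m := 0))
        · rintro (⟨t, ht, hc0, hck⟩ | ⟨rfl, t, ht⟩)
          · obtain ⟨h1, -⟩ := List.cons.injEq .. ▸ ht
            exact absurd h1.symm hc0
          · obtain ⟨h1, -⟩ := List.cons.injEq .. ▸ ht
            exact absurd h1.symm hk0
      · rw [code_cons_pos hi0 hik]
        simp only [Finset.mem_insert]
        constructor
        · rintro (h | h)
          · obtain ⟨-, h2⟩ := Prod.mk.injEq .. ▸ h
            exact Or.inl ⟨s, by rw [h2], h2 ▸ hi0, h2 ▸ hik⟩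
          · exact absurd h (not_mem_shf_zero (m := 0))
        · rintro (⟨t, ht, hc0, hck⟩ | ⟨rfl, t, ht⟩)
          · obtain ⟨h1, -⟩ := List.cons.injEq .. ▸ ht
            exact Or.inl (by rw [h1])
          · obtain ⟨h1, -⟩ := List.cons.injEq .. ▸ ht
            exact absurd h1 hik

lemma insert_cancel {α : Type} [DecidableEq α] {A B : Finset α} {a : α}
    (ha : a ∉ A) (hb : a ∉ B) (h : insert a A = insert a B) : A = B := by
  rw [← Finset.erase_insert ha, h, Finset.erase_insert hb]

end PartE
section PartF
open MC

variable {k : ℕ}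

lemma zero_ne_k (hk0 : k ≠ 0) : (0 : ℕ) ≠ k := fun h => hk0 h.symm

lemma pell_cons_zero (hk0 : k ≠ 0) {s : List ℕ} (h : GenPell k (0 :: s)) : GenPell k s :=
  (pell_tail h (zero_ne_k hk0)).2

lemma code_inj (hk0 : k ≠ 0) :
    ∀ n {u v : List ℕ}, u.length = n → GenPell k u → GenPell k v → u.length = v.length →
      code k u = code k v → u = v := by
  intro n
  induction n using Nat.strong_induction_on with
  | _ n IH =>
    intro u v hn hu hv hlen hcode
    cases u with
    | nil =>
      cases v with
      | nil => rfl
      | cons j t => simp at hlen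
    | cons i s =>
      cases v with
      | nil => simp at hlen
      | cons j t =>
        simp only [List.length_cons] at hlen hn
        by_cases hik : i = k
        · have hsy := hik.symm
          subst hsy
          obtain ⟨s', rfl, hs'⟩ := pell_kk hu
          have hOk : ((0 : ℕ), k) ∈ code k (j :: t) := by
            rw [← hcode, code_cons_k]
            exact Finset.mem_insert_self _ _
          rcases (zero_mem_code hk0).mp hOk with ⟨t1, ht1, -, h3⟩ | ⟨-, t1, ht1⟩
          · exact absurd rfl h3
          · obtain ⟨rfl, rfl⟩ : j = k ∧ t = t1 := by
              constructor
              · exact (List.cons.injEq .. ▸ ht1).1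
              · exact (List.cons.injEq .. ▸ ht1).2
            obtain ⟨t', rfl, ht'⟩ := pell_kk hv
            rw [code_cons_k, code_cons_k] at hcode
            simp only [List.tail_cons] at hcode
            have h1 := insert_cancel (not_mem_shf_zero (m := 1)) (not_mem_shf_zero (m := 1)) hcode
            have h2 := shf_injective 2 h1
            simp only [List.length_cons] at hlen hn
            have hs := IH (n - 2) (by omega) (u := s') (v := t') (by omega) hs' ht' (by omega) h2
            rw [hs]
        · by_cases hi0 : i = 0
          · subst hi0
            have hj0 : j = 0 := by
              by_contra hj0
              by_cases hjk : j = k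
              · have hsy := hjk.symm
                subst hsy
                have hmem : ((0 : ℕ), k) ∈ code k (0 :: s) := by
                  rw [hcode, code_cons_k]
                  exact Finset.mem_insert_self _ _
                rw [code_cons_zero hk0] at hmem
                exact not_mem_shf_zero (m := 0) hmem
              · have hmem : ((0 : ℕ), j) ∈ code k (0 :: s) := by
                  rw [hcode, code_cons_pos hj0 hjk]
                  exact Finset.mem_insert_self _ _
                rw [code_cons_zero hk0] at hmem
                exact not_mem_shf_zero (m := 0) hmem
            subst hj0
            rw [code_cons_zero hk0, code_cons_zero hk0] at hcode
            have h2 := shf_injective 1 hcode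
            have hs := IH (n - 1) (by omega) (u := s) (v := t) (by omega)
              (pell_cons_zero hk0 hu) (pell_cons_zero hk0 hv) (by omega) h2
            rw [hs]
          · have hji : j = i := by
              have hmem : ((0 : ℕ), i) ∈ code k (j :: t) := by
                rw [← hcode, code_cons_pos hi0 hik]
                exact Finset.mem_insert_self _ _
              rcases (zero_mem_code hk0).mp hmem with ⟨t1, ht1, -, -⟩ | ⟨hik', -⟩
              · exact (List.cons.injEq .. ▸ ht1).1
              · exact absurd hik' hik
            subst hji
            rw [code_cons_pos hi0 hik, code_cons_pos hi0 hik] at hcode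
            have h1 := insert_cancel (not_mem_shf_zero (m := 0)) (not_mem_shf_zero (m := 0)) hcode
            have h2 := shf_injective 1 h1
            have hs := IH (n - 1) (by omega) (u := s) (v := t) (by omega)
              (pell_tail hu hik).2 (pell_tail hv hik).2 (by omega) h2
            rw [hs]

lemma code_rep0 (hk0 : k ≠ 0) :
    ∀ n (a : List ℕ) (b : List ℕ) (i : ℕ), a.length = n → 0 < i → i < k →
      GenPell k (a ++ 0 :: b) →
      (a.length, i) ∉ code k (a ++ 0 :: b) ∧
      code k (a ++ i :: b) = insert (a.length, i) (code k (a ++ 0 :: b)) := by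
  intro n
  induction n using Nat.strong_induction_on with
  | _ n IH =>
    intro a b i hn hi0 hik hu
    cases a with
    | nil =>
      simp only [List.nil_append, List.length_nil]
      rw [code_cons_zero hk0, code_cons_pos (by omega) (by omega)]
      exact ⟨not_mem_shf_zero (m := 0), rfl⟩
    | cons j a' =>
      simp only [List.cons_append, List.length_cons] at hu hn ⊢
      by_cases hjk : j = k
      · have hsy := hjk.symm
        subst hsy
        obtain ⟨t, ht, hpt⟩ := pell_kk hu
        cases a' with
        | nil =>
          simp only [List.nil_append] at ht
          exact absurd ((List.cons.injEq .. ▸ ht).1) (zero_ne_k hk0)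
        | cons j2 a'' =>
          simp only [List.cons_append] at ht
          obtain ⟨rfl, ht2⟩ : j2 = k ∧ a'' ++ 0 :: b = t := by
            constructor
            · exact (List.cons.injEq .. ▸ ht).1
            · exact (List.cons.injEq .. ▸ ht).2
          rw [← ht2] at hpt
          simp only [List.length_cons] at hn ⊢
          obtain ⟨hnot, heq⟩ := IH (n - 2) (by omega) a'' b i (by omega) hi0 hik hpt
          rw [code_cons_k, code_cons_k]
          simp only [List.cons_append, List.tail_cons]
          constructor
          · intro hmem
            rcases Finset.mem_insert.mp hmem with h | h
            · have := (Prod.mk.injEq .. ▸ h).1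
              omega
            · rw [show a''.length + 1 + 1 = a''.length + 2 by omega] at h
              exact hnot (mem_shf_add.mp h)
          · rw [heq, shf_insert]
            simp only
            rw [Finset.insert_comm]
      · have hjlt := (pell_tail hu hjk).1
        have hpt := (pell_tail hu hjk).2
        obtain ⟨hnot, heq⟩ := IH (n - 1) (by omega) a' b i (by omega) hi0 hik hpt
        by_cases hj0 : j = 0
        · subst hj0
          rw [code_cons_zero hk0, code_cons_zero hk0, heq, shf_insert]
          constructor
          · intro hmem
            exact hnot (mem_shf_add.mp hmem)
          · rfl
        · rw [code_cons_pos hj0 hjk, code_cons_pos hj0 hjk, heq, shf_insert]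
          constructor
          · intro hmem
            rcases Finset.mem_insert.mp hmem with h | h
            · have := (Prod.mk.injEq .. ▸ h).1
              omega
            · exact hnot (mem_shf_add.mp h)
          · rw [Finset.insert_comm]

lemma code_rep00 (hk0 : k ≠ 0) :
    ∀ n (a : List ℕ) (b : List ℕ), a.length = n →
      GenPell k (a ++ 0 :: 0 :: b) →
      (a.length, k) ∉ code k (a ++ 0 :: 0 :: b) ∧
      code k (a ++ k :: k :: b) = insert (a.length, k) (code k (a ++ 0 :: 0 :: b)) := by
  intro n
  induction n using Nat.strong_induction_on with
  | _ n IH =>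
    intro a b hn hu
    cases a with
    | nil =>
      simp only [List.nil_append, List.length_nil]
      rw [code_cons_zero hk0, code_cons_zero hk0, code_cons_k]
      simp only [List.tail_cons]
      rw [shf_shf]
      exact ⟨fun h => not_mem_shf_zero (m := 1) h, rfl⟩
    | cons j a' =>
      simp only [List.cons_append, List.length_cons] at hu hn ⊢
      by_cases hjk : j = k
      · have hsy := hjk.symm
        subst hsy
        obtain ⟨t, ht, hpt⟩ := pell_kk hu
        cases a' with
        | nil =>
          simp only [List.nil_append] at ht
          exact absurd ((List.cons.injEq .. ▸ ht).1) (zero_ne_k hk0)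
        | cons j2 a'' =>
          simp only [List.cons_append] at ht
          obtain ⟨rfl, ht2⟩ : j2 = k ∧ a'' ++ 0 :: 0 :: b = t := by
            constructor
            · exact (List.cons.injEq .. ▸ ht).1
            · exact (List.cons.injEq .. ▸ ht).2
          rw [← ht2] at hpt
          simp only [List.length_cons] at hn ⊢
          obtain ⟨hnot, heq⟩ := IH (n - 2) (by omega) a'' b (by omega) hpt
          rw [code_cons_k, code_cons_k]
          simp only [List.cons_append, List.tail_cons]
          constructor
          · intro hmem
            rcases Finset.mem_insert.mp hmem with h | h
            · have := (Prod.mk.injEq .. ▸ h).1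
              omega
            · rw [show a''.length + 1 + 1 = a''.length + 2 by omega] at h
              exact hnot (mem_shf_add.mp h)
          · rw [heq, shf_insert]
            simp only
            rw [Finset.insert_comm]
      · have hpt := (pell_tail hu hjk).2
        obtain ⟨hnot, heq⟩ := IH (n - 1) (by omega) a' b (by omega) hpt
        by_cases hj0 : j = 0
        · subst hj0
          rw [code_cons_zero hk0, code_cons_zero hk0, heq, shf_insert]
          exact ⟨fun hmem => hnot (mem_shf_add.mp hmem), rfl⟩
        · rw [code_cons_pos hj0 hjk, code_cons_pos hj0 hjk, heq, shf_insert]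
          constructor
          · intro hmem
            rcases Finset.mem_insert.mp hmem with h | h
            · have := (Prod.mk.injEq .. ▸ h).1
              omega
            · exact hnot (mem_shf_add.mp h)
          · rw [Finset.insert_comm]

lemma pell_rep0 (hk0 : k ≠ 0) :
    ∀ n (a b : List ℕ) (i : ℕ), a.length = n → i < k → GenPell k (a ++ 0 :: b) →
      GenPell k (a ++ i :: b) := by
  intro n
  induction n using Nat.strong_induction_on with
  | _ n IH =>
    intro a b i hn hik hu
    cases a with
    | nil =>
      exact GenPell.cons i b hik (pell_cons_zero hk0 hu)
    | cons j a' =>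
      simp only [List.cons_append, List.length_cons] at hu hn ⊢
      by_cases hjk : j = k
      · have hsy := hjk.symm
        subst hsy
        obtain ⟨t, ht, hpt⟩ := pell_kk hu
        cases a' with
        | nil =>
          simp only [List.nil_append] at ht
          exact absurd ((List.cons.injEq .. ▸ ht).1) (zero_ne_k hk0)
        | cons j2 a'' =>
          simp only [List.cons_append] at ht
          obtain ⟨rfl, ht2⟩ : j2 = k ∧ a'' ++ 0 :: b = t := by
            constructor
            · exact (List.cons.injEq .. ▸ ht).1
            · exact (List.cons.injEq .. ▸ ht).2
          rw [← ht2] at hpt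
          simp only [List.length_cons] at hn
          exact GenPell.kk _ (IH (n - 2) (by omega) a'' b i (by omega) hik hpt)
      · exact GenPell.cons j _ (pell_tail hu hjk).1
          (IH (n - 1) (by omega) a' b i (by omega) hik (pell_tail hu hjk).2)

lemma pell_rep00 (hk0 : k ≠ 0) :
    ∀ n (a b : List ℕ), a.length = n → GenPell k (a ++ 0 :: 0 :: b) →
      GenPell k (a ++ k :: k :: b) := by
  intro n
  induction n using Nat.strong_induction_on with
  | _ n IH =>
    intro a b hn hu
    cases a with
    | nil =>
      exact GenPell.kk b (pell_cons_zero hk0 (pell_cons_zero hk0 hu))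
    | cons j a' =>
      simp only [List.cons_append, List.length_cons] at hu hn ⊢
      by_cases hjk : j = k
      · have hsy := hjk.symm
        subst hsy
        obtain ⟨t, ht, hpt⟩ := pell_kk hu
        cases a' with
        | nil =>
          simp only [List.nil_append] at ht
          exact absurd ((List.cons.injEq .. ▸ ht).1) (zero_ne_k hk0)
        | cons j2 a'' =>
          simp only [List.cons_append] at ht
          obtain ⟨rfl, ht2⟩ : j2 = k ∧ a'' ++ 0 :: 0 :: b = t := by
            constructor
            · exact (List.cons.injEq .. ▸ ht).1
            · exact (List.cons.injEq .. ▸ ht).2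
          rw [← ht2] at hpt
          simp only [List.length_cons] at hn
          exact GenPell.kk _ (IH (n - 2) (by omega) a'' b (by omega) hpt)
      · exact GenPell.cons j _ (pell_tail hu hjk).1
          (IH (n - 1) (by omega) a' b (by omega) (pell_tail hu hjk).2)

end PartF
section PartG
open MC

variable {k : ℕ}

lemma mun_cons (x : ℕ) {u v : List ℕ} (h : munariniRel k u v) :
    munariniRel k (x :: u) (x :: v) := by
  rcases h with ⟨a, b, i, h1, h2, h3, h4⟩ | ⟨a, b, h3, h4⟩
  · exact Or.inl ⟨x :: a, b, i, h1, h2, by rw [h3]; rfl, by rw [h4]; rfl⟩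
  · exact Or.inr ⟨x :: a, b, by rw [h3]; rfl, by rw [h4]; rfl⟩

lemma code_step (hk0 : k ≠ 0) :
    ∀ n {u v : List ℕ}, u.length = n → GenPell k u → GenPell k v → u.length = v.length →
      (∃ x, x ∉ code k u ∧ code k v = insert x (code k u)) → munariniRel k u v := by
  intro n
  induction n using Nat.strong_induction_on with
  | _ n IH =>
    intro u v hn hu hv hlen hx
    obtain ⟨x, hxu, hins⟩ := hx
    cases u with
    | nil =>
      cases v with
      | nil =>
        rw [code_nil] at hins
        exact absurd hins.symm (Finset.insert_ne_empty x ∅)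
      | cons j t => simp at hlen
    | cons i s =>
      cases v with
      | nil => simp at hlen
      | cons j t =>
        simp only [List.length_cons] at hlen hn
        by_cases hik : i = k
        · have hsy := hik.symm; subst hsy
          obtain ⟨s', rfl, hs'⟩ := pell_kk hu
          by_cases hjk : j = k
          · have hsy := hjk.symm; subst hsy
            obtain ⟨t', rfl, ht'⟩ := pell_kk hv
            rw [code_cons_k, code_cons_k] at hins
            rw [code_cons_k] at hxu
            simp only [List.tail_cons] at hins hxu
            have hxne : x ≠ ((0 : ℕ), k) := fun hc => hxu (hc ▸ Finset.mem_insert_self _ _)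
            rw [Finset.insert_comm] at hins
            have h1 : shf 2 (code k t') = insert x (shf 2 (code k s')) :=
              insert_cancel (not_mem_shf_zero (m := 1)) (by
                intro hc
                rcases Finset.mem_insert.mp hc with hc | hc
                · exact hxne hc.symm
                · exact not_mem_shf_zero (m := 1) hc) hins
            have hxmem : x ∈ shf 2 (code k t') := h1 ▸ Finset.mem_insert_self _ _
            obtain ⟨e, he, hxe⟩ := mem_shf.mp hxmem
            have h2 : shf 2 (code k t') = shf 2 (insert e (code k s')) := by
              rw [shf_insert, ← hxe]; exact h1
            have h3 : code k t' = insert e (code k s') := shf_injective 2 h2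
            have hen : e ∉ code k s' := by
              intro hc
              apply hxu
              exact Finset.mem_insert_of_mem (hxe ▸ mem_shf_add.mpr hc)
            simp only [List.length_cons] at hlen hn
            have hrel := IH (n - 2) (by omega) (u := s') (v := t') (by omega) hs' ht'
              (by omega) ⟨e, hen, h3⟩
            exact mun_cons k (mun_cons k hrel)
          · have hmem : ((0 : ℕ), k) ∈ code k (j :: t) := by
              rw [hins]
              exact Finset.mem_insert_of_mem
                (by rw [code_cons_k]; exact Finset.mem_insert_self _ _)
            rcases (zero_mem_code hk0).mp hmem with ⟨t1, ht1, -, hck⟩ | ⟨-, t1, ht1⟩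
            · exact absurd rfl hck
            · exact absurd (List.cons.injEq .. ▸ ht1).1 hjk
        · by_cases hjk : j = k
          · have hsy := hjk.symm; subst hsy
            obtain ⟨t', rfl, ht'⟩ := pell_kk hv
            have h0kv : ((0 : ℕ), k) ∈ code k (k :: k :: t') := by
              rw [code_cons_k]; exact Finset.mem_insert_self _ _
            have h0ku : ((0 : ℕ), k) ∉ code k (i :: s) := by
              intro hc
              rcases (zero_mem_code hk0).mp hc with ⟨t1, ht1, -, hck⟩ | ⟨-, t1, ht1⟩
              · exact hck rfl
              · exact hik (List.cons.injEq .. ▸ ht1).1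
            have hxeq : x = ((0 : ℕ), k) := by
              have hmem := hins ▸ h0kv
              rcases Finset.mem_insert.mp hmem with h | h
              · exact h.symm
              · exact absurd h h0ku
            subst hxeq
            have hcu : code k (i :: s) = shf 2 (code k t') := by
              rw [code_cons_k] at hins
              simp only [List.tail_cons] at hins
              exact (insert_cancel (not_mem_shf_zero (m := 1)) h0ku hins).symm
            have hi0 : i = 0 := by
              by_contra hi0
              have hmem : ((0 : ℕ), i) ∈ code k (i :: s) := by
                rw [code_cons_pos hi0 hik]; exact Finset.mem_insert_self _ _
              rw [hcu] at hmem
              exact not_mem_shf_zero (m := 1) hmem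
            subst hi0
            have hps := pell_cons_zero hk0 hu
            cases s with
            | nil => simp only [List.length_cons, List.length_nil] at hlen; omega
            | cons i2 s2 =>
              have hcu2 : shf 1 (code k (i2 :: s2)) = shf 2 (code k t') := by
                rw [← code_cons_zero hk0, hcu]
              have hi20 : i2 = 0 := by
                by_contra hi20
                by_cases hi2k : i2 = k
                · have hsy := hi2k.symm; subst hsy
                  have hmem : ((0 : ℕ), k) ∈ code k (k :: s2) := by
                    rw [code_cons_k]; exact Finset.mem_insert_self _ _
                  have : ((0 : ℕ) + 1, k) ∈ shf 1 (code k (k :: s2)) := mem_shf_add.mpr hmem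
                  rw [hcu2] at this
                  obtain ⟨e, -, hee⟩ := mem_shf.mp this
                  have := congrArg Prod.fst hee
                  simp only at this
                  omega
                · have hmem : ((0 : ℕ), i2) ∈ code k (i2 :: s2) := by
                    rw [code_cons_pos hi20 hi2k]; exact Finset.mem_insert_self _ _
                  have : ((0 : ℕ) + 1, i2) ∈ shf 1 (code k (i2 :: s2)) := mem_shf_add.mpr hmem
                  rw [hcu2] at this
                  obtain ⟨e, -, hee⟩ := mem_shf.mp this
                  have := congrArg Prod.fst hee
                  simp only at this
                  omega
              subst hi20
              rw [code_cons_zero hk0, shf_shf] at hcu2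
              have hst := shf_injective 2 hcu2
              have hs2 : s2 = t' := code_inj hk0 s2.length rfl
                (pell_cons_zero hk0 hps) ht' (by simp at hlen ⊢; omega) hst
              subst hs2
              exact Or.inr ⟨[], s2, rfl, rfl⟩
          · by_cases hij : i = j
            · subst hij
              by_cases hi0 : i = 0
              · subst hi0
                rw [code_cons_zero hk0, code_cons_zero hk0] at hins
                rw [code_cons_zero hk0] at hxu
                have hxmem : x ∈ shf 1 (code k t) := hins ▸ Finset.mem_insert_self _ _
                obtain ⟨e, he, hxe⟩ := mem_shf.mp hxmem
                have h2 : shf 1 (code k t) = shf 1 (insert e (code k s)) := by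
                  rw [shf_insert, ← hxe]; exact hins
                have h3 := shf_injective 1 h2
                have hen : e ∉ code k s := fun hc => hxu (hxe ▸ mem_shf_add.mpr hc)
                exact mun_cons 0 (IH (n - 1) (by omega) (u := s) (v := t) (by omega)
                  (pell_cons_zero hk0 hu) (pell_cons_zero hk0 hv) (by omega) ⟨e, hen, h3⟩)
              · rw [code_cons_pos hi0 hik, code_cons_pos hi0 hik] at hins
                rw [code_cons_pos hi0 hik] at hxu
                have hxne : x ≠ ((0 : ℕ), i) := fun hc => hxu (hc ▸ Finset.mem_insert_self _ _)
                rw [Finset.insert_comm] at hins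
                have h1 : shf 1 (code k t) = insert x (shf 1 (code k s)) :=
                  insert_cancel (not_mem_shf_zero (m := 0)) (by
                    intro hc
                    rcases Finset.mem_insert.mp hc with hc | hc
                    · exact hxne hc.symm
                    · exact not_mem_shf_zero (m := 0) hc) hins
                have hxmem : x ∈ shf 1 (code k t) := h1 ▸ Finset.mem_insert_self _ _
                obtain ⟨e, he, hxe⟩ := mem_shf.mp hxmem
                have h2 : shf 1 (code k t) = shf 1 (insert e (code k s)) := by
                  rw [shf_insert, ← hxe]; exact h1
                have h3 := shf_injective 1 h2
                have hen : e ∉ code k s := fun hc =>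
                  hxu (Finset.mem_insert_of_mem (hxe ▸ mem_shf_add.mpr hc))
                exact mun_cons i (IH (n - 1) (by omega) (u := s) (v := t) (by omega)
                  (pell_tail hu hik).2 (pell_tail hv hik).2 (by omega) ⟨e, hen, h3⟩)
            · by_cases hj0 : j = 0
              · subst hj0
                have hi0 : i ≠ 0 := hij
                have hmem : ((0 : ℕ), i) ∈ code k (0 :: t) := by
                  rw [hins]
                  exact Finset.mem_insert_of_mem
                    (by rw [code_cons_pos hi0 hik]; exact Finset.mem_insert_self _ _)
                rw [code_cons_zero hk0] at hmem
                exact absurd hmem (not_mem_shf_zero (m := 0))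
              · have h0jv : ((0 : ℕ), j) ∈ code k (j :: t) := by
                  rw [code_cons_pos hj0 hjk]; exact Finset.mem_insert_self _ _
                have h0ju : ((0 : ℕ), j) ∉ code k (i :: s) := by
                  intro hc
                  rcases (zero_mem_code hk0).mp hc with ⟨t1, ht1, -, -⟩ | ⟨hjk', -⟩
                  · exact hij (List.cons.injEq .. ▸ ht1).1
                  · exact hjk hjk'
                have hxeq : x = ((0 : ℕ), j) := by
                  have hmem := hins ▸ h0jv
                  rcases Finset.mem_insert.mp hmem with h | h
                  · exact h.symm
                  · exact absurd h h0ju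
                subst hxeq
                have hi0 : i = 0 := by
                  by_contra hi0
                  have hmem : ((0 : ℕ), i) ∈ code k (j :: t) := by
                    rw [hins]
                    exact Finset.mem_insert_of_mem
                      (by rw [code_cons_pos hi0 hik]; exact Finset.mem_insert_self _ _)
                  rcases (zero_mem_code hk0).mp hmem with ⟨t1, ht1, -, -⟩ | ⟨hik', -⟩
                  · exact hij ((List.cons.injEq .. ▸ ht1).1).symm
                  · exact hik hik'
                subst hi0
                rw [code_cons_zero hk0, code_cons_pos hj0 hjk] at hins
                have h1 : shf 1 (code k t) = shf 1 (code k s) :=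
                  insert_cancel (not_mem_shf_zero (m := 0)) (not_mem_shf_zero (m := 0)) hins
                have h2 := shf_injective 1 h1
                have hst : t = s := code_inj hk0 t.length rfl
                  (pell_tail hv hjk).2 (pell_cons_zero hk0 hu) (by omega) h2
                have hjlt := (pell_tail hv hjk).1
                exact Or.inl ⟨[], s, j, Nat.pos_of_ne_zero hj0, hjlt, rfl, by simp [hst]⟩

lemma code_erase (hk0 : k ≠ 0) :
    ∀ n {u : List ℕ} {x : EE}, u.length = n → GenPell k u → x ∈ code k u →
      ∃ v, GenPell k v ∧ v.length = u.length ∧ code k v = (code k u).erase x := by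
  intro n
  induction n using Nat.strong_induction_on with
  | _ n IH =>
    intro u x hn hu hxm
    cases u with
    | nil => rw [code_nil] at hxm; exact absurd hxm (Finset.notMem_empty x)
    | cons i s =>
      simp only [List.length_cons] at hn
      by_cases hik : i = k
      · have hsy := hik.symm; subst hsy
        obtain ⟨s', rfl, hs'⟩ := pell_kk hu
        rw [code_cons_k] at hxm
        simp only [List.tail_cons] at hxm
        rcases Finset.mem_insert.mp hxm with hx0 | hxs
        · refine ⟨0 :: 0 :: s', GenPell.cons 0 _ (Nat.pos_of_ne_zero hk0)
            (GenPell.cons 0 _ (Nat.pos_of_ne_zero hk0) hs'), by simp, ?_⟩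
          rw [code_cons_zero hk0, code_cons_zero hk0, shf_shf, code_cons_k]
          simp only [List.tail_cons]
          rw [hx0, Finset.erase_insert (not_mem_shf_zero (m := 1))]
        · obtain ⟨e, he, hxe⟩ := mem_shf.mp hxs
          simp only [List.length_cons] at hn
          obtain ⟨v', hv', hlv', hcv'⟩ := IH (n - 2) (by omega) (u := s') (x := e)
            (by omega) hs' he
          refine ⟨k :: k :: v', GenPell.kk _ hv', by simp [hlv'], ?_⟩
          rw [code_cons_k, code_cons_k]
          simp only [List.tail_cons]
          rw [hcv', shf_erase, ← hxe, Finset.erase_insert_of_ne]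
          rw [hxe]
          intro hc
          have := congrArg Prod.fst hc
          simp only at this
          omega
      · have hps := (pell_tail hu hik).2
        by_cases hi0 : i = 0
        · subst hi0
          rw [code_cons_zero hk0] at hxm
          obtain ⟨e, he, hxe⟩ := mem_shf.mp hxm
          obtain ⟨v', hv', hlv', hcv'⟩ := IH (n - 1) (by omega) (u := s) (x := e)
            (by omega) hps he
          refine ⟨0 :: v', GenPell.cons 0 _ (Nat.pos_of_ne_zero hk0) hv', by simp [hlv'], ?_⟩
          rw [code_cons_zero hk0, code_cons_zero hk0, hcv', shf_erase, ← hxe]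
        · rw [code_cons_pos hi0 hik] at hxm
          rcases Finset.mem_insert.mp hxm with hx0 | hxs
          · refine ⟨0 :: s, GenPell.cons 0 _ (Nat.pos_of_ne_zero hk0) hps, by simp, ?_⟩
            rw [code_cons_zero hk0, code_cons_pos hi0 hik, hx0,
              Finset.erase_insert (not_mem_shf_zero (m := 0))]
          · obtain ⟨e, he, hxe⟩ := mem_shf.mp hxs
            obtain ⟨v', hv', hlv', hcv'⟩ := IH (n - 1) (by omega) (u := s) (x := e)
              (by omega) hps he
            refine ⟨i :: v', GenPell.cons i _ (pell_tail hu hik).1 hv', by simp [hlv'], ?_⟩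
            rw [code_cons_pos hi0 hik, code_cons_pos hi0 hik, hcv', shf_erase, ← hxe,
              Finset.erase_insert_of_ne]
            rw [hxe]
            intro hc
            have := congrArg Prod.fst hc
            simp only at this
            omega

lemma code_down (hk0 : k ≠ 0) :
    ∀ d {u : List ℕ} {C : Finset EE}, GenPell k u → C ⊆ code k u →
      (code k u).card = C.card + d → ∃ v, GenPell k v ∧ v.length = u.length ∧ code k v = C := by
  intro d
  induction d with
  | zero =>
    intro u C hu hsub hcard
    exact ⟨u, hu, rfl, (Finset.eq_of_subset_of_card_le hsub (by omega)).symm⟩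
  | succ d IH =>
    intro u C hu hsub hcard
    have hne : ¬ code k u ⊆ C := by
      intro hc
      have := Finset.card_le_card hc
      omega
    obtain ⟨x, hxm, hxC⟩ := Finset.exists_of_ssubset ⟨hsub, hne⟩
    obtain ⟨v1, hv1, hl1, hc1⟩ := code_erase hk0 u.length rfl hu hxm
    have hsub1 : C ⊆ code k v1 := by
      rw [hc1]
      intro y hy
      exact Finset.mem_erase.mpr ⟨fun hc => hxC (hc ▸ hy), hsub hy⟩
    have hcard1 : (code k v1).card = C.card + d := by
      rw [hc1, Finset.card_erase_of_mem hxm]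
      omega
    obtain ⟨v, hv, hl, hc⟩ := IH hv1 hsub1 hcard1
    exact ⟨v, hv, hl.trans hl1, hc⟩

end PartG
section PartH
open MC

variable {k : ℕ}

lemma shf_card {m : ℕ} {A : Finset EE} : (shf m A).card = A.card :=
  Finset.card_image_of_injective _ (fun a b h => by
    have h1 := congrArg Prod.fst h
    have h2 := congrArg Prod.snd h
    simp only at h1 h2
    exact Prod.ext (by omega) h2)

def fullF (k : ℕ) : ℕ → ℕ → Finset (List ℕ)
  | 0, p => if p = 0 then {[]} else ∅
  | 1, p => if p = 1 then (Finset.Ioo 0 k).image (fun i => [i]) else ∅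
  | (n+2), p => if p = 0 then ∅ else
      ((Finset.Ioo 0 k) ×ˢ fullF k (n+1) (p-1)).image (fun iu => iu.1 :: iu.2)
      ∪ (fullF k n (p-1)).image (fun u => k :: k :: u)

def Rval (k n p : ℕ) : ℕ := if n ≤ 2*p ∧ p ≤ n then (k-1)^(2*p-n) * p.choose (n-p) else 0

lemma Rrec (n p : ℕ) (hp : 1 ≤ p) :
    Rval k (n+2) p = (k-1) * Rval k (n+1) (p-1) + Rval k n (p-1) := by
  obtain ⟨q, rfl⟩ : ∃ q, p = q + 1 := ⟨p - 1, by omega⟩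
  simp only [Nat.add_sub_cancel, Rval]
  by_cases hA : n + 2 ≤ 2*(q+1) ∧ q+1 ≤ n+2
  · by_cases hB : n+1 ≤ 2*q ∧ q ≤ n+1
    · by_cases hC : n ≤ 2*q ∧ q ≤ n
      · rw [if_pos hA, if_pos hB, if_pos hC]
        have e1 : 2*(q+1) - (n+2) = 2*q - n := by omega
        have e2 : (n+2) - (q+1) = n + 1 - q := by omega
        rw [e1, e2]
        have hpow : (k-1) * (k-1)^(2*q-(n+1)) = (k-1)^(2*q-n) := by
          rw [← pow_succ']
          congr 1
          omega
        have hpas : Nat.choose (q+1) (n+1-q) = Nat.choose q (n-q) + Nat.choose q (n+1-q) := by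
          have e : n + 1 - q = (n - q) + 1 := by omega
          rw [e, Nat.choose_succ_succ]
        rw [hpas, ← mul_assoc, hpow]
        ring
      · have hq : q = n + 1 := by omega
        subst hq
        rw [if_pos hA, if_pos hB, if_neg hC]
        have e1 : 2*(n+1+1) - (n+2) = n+2 := by omega
        have e2 : (n+2) - (n+1+1) = 0 := by omega
        have e3 : 2*(n+1) - (n+1) = n+1 := by omega
        have e4 : (n+1) - (n+1) = 0 := by omega
        rw [e1, e2, e3, e4, Nat.choose_zero_right, Nat.choose_zero_right,
          mul_one, mul_one, add_zero, ← pow_succ']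
    · by_cases hC : n ≤ 2*q ∧ q ≤ n
      · rw [if_pos hA, if_neg hB, if_pos hC]
        have e1 : 2*(q+1) - (n+2) = 0 := by omega
        have e2 : n+2-(q+1) = q+1 := by omega
        have e3 : 2*q - n = 0 := by omega
        have e4 : n - q = q := by omega
        rw [e1, e2, e3, e4]
        simp [Nat.choose_self]
      · exact absurd ⟨by omega, by omega⟩ hC
  · have hB : ¬(n+1 ≤ 2*q ∧ q ≤ n+1) := by omega
    have hC : ¬(n ≤ 2*q ∧ q ≤ n) := by omega
    rw [if_neg hA, if_neg hB, if_neg hC]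
    simp

lemma mem_fullF (hk2 : 2 ≤ k) :
    ∀ n p (u : List ℕ), u ∈ fullF k n p ↔
      GenPell k u ∧ u.length = n ∧ 0 ∉ u ∧ (code k u).card = p := by
  have hk0 : k ≠ 0 := by omega
  intro n
  induction n using Nat.strong_induction_on with
  | _ n IH =>
    intro p u
    match n with
    | 0 =>
      rw [fullF]
      by_cases hp : p = 0
      · subst hp
        rw [if_pos rfl, Finset.mem_singleton]
        constructor
        · rintro rfl
          exact ⟨GenPell.nil, rfl, by simp, by rw [code_nil]; simp⟩
        · rintro ⟨-, hlen, -, -⟩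
          exact List.length_eq_zero_iff.mp hlen
      · rw [if_neg hp]
        simp only [Finset.notMem_empty, false_iff]
        rintro ⟨-, hlen, -, hcard⟩
        rw [List.length_eq_zero_iff.mp hlen, code_nil] at hcard
        simp at hcard
        exact hp hcard.symm
    | 1 =>
      rw [fullF]
      by_cases hp : p = 1
      · subst hp
        rw [if_pos rfl]
        simp only [Finset.mem_image, Finset.mem_Ioo]
        constructor
        · rintro ⟨i, ⟨hi0, hik⟩, rfl⟩
          refine ⟨GenPell.cons i [] hik GenPell.nil, rfl, by simp; omega, ?_⟩
          rw [code_cons_pos (by omega) (by omega), code_nil]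
          simp [shf]
        · rintro ⟨hpell, hlen, h0, -⟩
          obtain ⟨i, rfl⟩ : ∃ i, u = [i] := by
            cases u with
            | nil => simp at hlen
            | cons a t =>
              simp only [List.length_cons] at hlen
              exact ⟨a, by rw [List.length_eq_zero_iff.mp (by omega : t.length = 0)]⟩
          have hik : i < k := by
            cases hpell with
            | cons _ _ h _ => exact h
          have hi0 : 0 < i := by
            simp only [List.mem_singleton] at h0
            omega
          exact ⟨i, ⟨hi0, hik⟩, rfl⟩
      · rw [if_neg hp]
        simp only [Finset.notMem_empty, false_iff]
        rintro ⟨hpell, hlen, h0, hcard⟩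
        obtain ⟨i, rfl⟩ : ∃ i, u = [i] := by
          cases u with
          | nil => simp at hlen
          | cons a t =>
            simp only [List.length_cons] at hlen
            exact ⟨a, by rw [List.length_eq_zero_iff.mp (by omega : t.length = 0)]⟩
        have hik : i < k := by
          cases hpell with
          | cons _ _ h _ => exact h
        have hi0 : i ≠ 0 := by
          simp only [List.mem_singleton] at h0
          omega
        rw [code_cons_pos hi0 (by omega), code_nil] at hcard
        simp [shf] at hcard
        exact hp hcard.symm
    | (m+2) =>
      rw [fullF]
      by_cases hp : p = 0
      · subst hp
        rw [if_pos rfl]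
        simp only [Finset.notMem_empty, false_iff]
        rintro ⟨hpell, hlen, h0, hcard⟩
        cases u with
        | nil => simp at hlen
        | cons i s =>
          by_cases hik : i = k
          · have hsy := hik.symm; subst hsy
            rw [code_cons_k] at hcard
            rw [Finset.card_insert_of_notMem (not_mem_shf_zero (m := 1))] at hcard
            omega
          · have hi0 : i ≠ 0 := fun hc => h0 (by rw [hc]; exact List.mem_cons_self (a := 0) (l := s))
            rw [code_cons_pos hi0 hik] at hcard
            rw [Finset.card_insert_of_notMem (not_mem_shf_zero (m := 0))] at hcard
            omega
      · rw [if_neg hp]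
        simp only [Finset.mem_union, Finset.mem_image, Finset.mem_product, Finset.mem_Ioo]
        constructor
        · rintro (⟨⟨i, w⟩, ⟨⟨hi0, hik⟩, hw⟩, rfl⟩ | ⟨w, hw, rfl⟩)
          · obtain ⟨hpw, hlw, h0w, hcw⟩ := (IH (m+1) (by omega) (p-1) w).mp hw
            refine ⟨GenPell.cons i w hik hpw, by simp [hlw], ?_, ?_⟩
            · simp only [List.mem_cons]
              rintro (hc | hc)
              · omega
              · exact h0w hc
            · rw [code_cons_pos (by omega) (by omega),
                Finset.card_insert_of_notMem (not_mem_shf_zero (m := 0)), shf_card, hcw]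
              omega
          · obtain ⟨hpw, hlw, h0w, hcw⟩ := (IH m (by omega) (p-1) w).mp hw
            refine ⟨GenPell.kk w hpw, by simp [hlw], ?_, ?_⟩
            · simp only [List.mem_cons]
              rintro (hc | hc | hc)
              · omega
              · omega
              · exact h0w hc
            · rw [code_cons_k]
              simp only [List.tail_cons]
              rw [Finset.card_insert_of_notMem (not_mem_shf_zero (m := 1)), shf_card, hcw]
              omega
        · rintro ⟨hpell, hlen, h0, hcard⟩
          cases u with
          | nil => simp at hlen
          | cons i s =>
            simp only [List.length_cons] at hlen
            by_cases hik : i = k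
            · have hsy := hik.symm; subst hsy
              obtain ⟨w, rfl, hpw⟩ := pell_kk hpell
              right
              refine ⟨w, ?_, rfl⟩
              rw [IH m (by omega) (p-1) w]
              rw [code_cons_k] at hcard
              simp only [List.tail_cons] at hcard
              rw [Finset.card_insert_of_notMem (not_mem_shf_zero (m := 1)), shf_card] at hcard
              refine ⟨hpw, by simp at hlen; omega, ?_, by omega⟩
              intro hc
              exact h0 (List.mem_cons_of_mem _ (List.mem_cons_of_mem _ hc))
            · left
              have hi0 : i ≠ 0 := fun hc => h0 (by rw [hc]; exact List.mem_cons_self (a := 0) (l := s))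
              have hps := (pell_tail hpell hik).2
              refine ⟨(i, s), ⟨⟨by omega, (pell_tail hpell hik).1⟩, ?_⟩, rfl⟩
              rw [IH (m+1) (by omega) (p-1) s]
              rw [code_cons_pos hi0 hik,
                Finset.card_insert_of_notMem (not_mem_shf_zero (m := 0)), shf_card] at hcard
              refine ⟨hps, by omega, ?_, by omega⟩
              intro hc
              exact h0 (List.mem_cons_of_mem _ hc)

lemma card_fullF (hk2 : 2 ≤ k) : ∀ n p, (fullF k n p).card = Rval k n p := by
  have hk0 : k ≠ 0 := by omega
  intro n
  induction n using Nat.strong_induction_on with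
  | _ n IH =>
    intro p
    match n with
    | 0 =>
      rw [fullF, Rval]
      by_cases hp : p = 0
      · subst hp
        rw [if_pos rfl, if_pos (by omega)]
        simp
      · rw [if_neg hp, if_neg (by omega)]
        simp
    | 1 =>
      rw [fullF, Rval]
      by_cases hp : p = 1
      · subst hp
        rw [if_pos rfl, if_pos (by omega)]
        rw [Finset.card_image_of_injective _ (fun a b h => by simpa using h)]
        simp [Nat.card_Ioo]
      · rw [if_neg hp, if_neg (by omega)]
        simp
    | (m+2) =>
      rw [fullF]
      by_cases hp : p = 0
      · subst hp
        rw [if_pos rfl, Rval, if_neg (by omega)]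
        simp
      · rw [if_neg hp]
        have hdisj : Disjoint
            (((Finset.Ioo 0 k) ×ˢ fullF k (m+1) (p-1)).image (fun iu => iu.1 :: iu.2))
            ((fullF k m (p-1)).image (fun u => k :: k :: u)) := by
          rw [Finset.disjoint_left]
          rintro u hu1 hu2
          simp only [Finset.mem_image, Finset.mem_product, Finset.mem_Ioo] at hu1 hu2
          obtain ⟨⟨i, w⟩, ⟨⟨-, hik⟩, -⟩, rfl⟩ := hu1
          obtain ⟨w', -, heq⟩ := hu2
          have := (List.cons.injEq .. ▸ heq).1
          omega
        rw [Finset.card_union_of_disjoint hdisj]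
        rw [Finset.card_image_of_injective _
          (fun a b h => by
            have h1 := (List.cons.injEq .. ▸ h).1
            have h2 := (List.cons.injEq .. ▸ h).2
            exact Prod.ext h1 h2)]
        rw [Finset.card_image_of_injective _
          (fun a b h => by
            have := (List.cons.injEq .. ▸ h).2
            exact (List.cons.injEq .. ▸ this).2)]
        rw [Finset.card_product, IH (m+1) (by omega) (p-1), IH m (by omega) (p-1)]
        rw [Nat.card_Ioo]
        have := Rrec (k := k) m p (by omega)
        rw [this]
        simp

end PartH

section PartI
open MC

/-- the number of maximal induced hypercubes of dimension `p` in `M_{n,k}`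
is `(k−1)^{2p−n}·C(p, n−p)` when `n ≤ 2p` and `p ≤ n`, and `0` otherwise. -/
theorem munarini_maximal_cube_count (k n p : ℕ) (hk : 2 ≤ k) :
    maxCubeCount (MunariniGraph n k) p =
      if n ≤ 2 * p ∧ p ≤ n then (k - 1) ^ (2 * p - n) * p.choose (n - p) else 0 := by
  classical
  have hk0 : k ≠ 0 := by omega
  set 𝒜 : Set (Finset EE) :=
    {A | ∃ u : List ℕ, GenPell k u ∧ u.length = n ∧ code k u = A} with h𝒜
  have hdown : ∀ B ∈ 𝒜, ∀ C ⊆ B, C ∈ 𝒜 := by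
    rintro B ⟨u, hu, hlen, rfl⟩ C hsub
    obtain ⟨v, hv, hlv, hcv⟩ := code_down hk0 ((code k u).card - C.card) hu hsub
      (by have := Finset.card_le_card hsub; omega)
    exact ⟨v, hv, hlv.trans hlen, hcv⟩
  have hbij : Function.Bijective
      (fun v : PellVtx n k => (⟨code k v.1, ⟨v.1, v.2.2, v.2.1, rfl⟩⟩ : ↥𝒜)) := by
    constructor
    · intro u v h
      have h2 : code k u.1 = code k v.1 := congrArg Subtype.val h
      exact Subtype.ext (code_inj hk0 u.1.length rfl u.2.2 v.2.2 (by rw [u.2.1, v.2.1]) h2)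
    · rintro ⟨A, u, hu, hlen, rfl⟩
      exact ⟨⟨u, hlen, hu⟩, rfl⟩
  set e : PellVtx n k ≃ ↥𝒜 := Equiv.ofBijective _ hbij with he
  have hiso : MunariniGraph n k ≃g (bigG EE).induce 𝒜 := by
    refine { toEquiv := e, map_rel_iff' := ?_ }
    intro u v
    have hlhs : ((bigG EE).induce 𝒜).Adj (e u) (e v) ↔
        (bigG EE).Adj (code k u.1) (code k v.1) := Iff.rfl
    rw [hlhs, bigG_adj]
    simp only [MunariniGraph, SimpleGraph.fromRel_adj]
    constructor
    · rintro (⟨x, hx, hins⟩ | ⟨x, hx, hins⟩)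
      · have hmun := code_step hk0 u.1.length rfl u.2.2 v.2.2
          (by rw [u.2.1, v.2.1]) ⟨x, hx, hins⟩
        refine ⟨?_, Or.inl hmun⟩
        rintro rfl
        exact hx (hins ▸ Finset.mem_insert_self x _)
      · have hmun := code_step hk0 v.1.length rfl v.2.2 u.2.2
          (by rw [u.2.1, v.2.1]) ⟨x, hx, hins⟩
        refine ⟨?_, Or.inr hmun⟩
        rintro rfl
        exact hx (hins ▸ Finset.mem_insert_self x _)
    · rintro ⟨hne, hmun | hmun⟩
      · left
        rcases hmun with ⟨a, b, i, hi0, hik, hu', hv'⟩ | ⟨a, b, hu', hv'⟩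
        · obtain ⟨hnot, heq⟩ := code_rep0 hk0 a.length a b i rfl hi0 hik (hu' ▸ u.2.2)
          exact ⟨(a.length, i), by rw [hu']; exact hnot, by rw [hu', hv']; exact heq⟩
        · obtain ⟨hnot, heq⟩ := code_rep00 hk0 a.length a b rfl (hu' ▸ u.2.2)
          exact ⟨(a.length, k), by rw [hu']; exact hnot, by rw [hu', hv']; exact heq⟩
      · right
        rcases hmun with ⟨a, b, i, hi0, hik, hv', hu'⟩ | ⟨a, b, hv', hu'⟩
        · obtain ⟨hnot, heq⟩ := code_rep0 hk0 a.length a b i rfl hi0 hik (hv' ▸ v.2.2)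
          exact ⟨(a.length, i), by rw [hv']; exact hnot, by rw [hv', hu']; exact heq⟩
        · obtain ⟨hnot, heq⟩ := code_rep00 hk0 a.length a b rfl (hv' ▸ v.2.2)
          exact ⟨(a.length, k), by rw [hv']; exact hnot, by rw [hv', hu']; exact heq⟩
  rw [maxCubeCount_congr hiso p]
  unfold maxCubeCount
  rw [classification 𝒜 hdown p]
  have hinjOn : Set.InjOn (fun B => {C : ↥𝒜 | C.1 ⊆ B})
      {B | B ∈ 𝒜 ∧ B.card = p ∧ ∀ B' ∈ 𝒜, B ⊆ B' → B' = B} := by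
    intro B1 h1 B2 h2 heq0
    have heq : {C : ↥𝒜 | C.1 ⊆ B1} = {C : ↥𝒜 | C.1 ⊆ B2} := heq0
    have m1 : (⟨B1, h1.1⟩ : ↥𝒜) ∈ {C : ↥𝒜 | C.1 ⊆ B1} := show B1 ⊆ B1 from subset_rfl
    rw [heq] at m1
    have m2 : (⟨B2, h2.1⟩ : ↥𝒜) ∈ {C : ↥𝒜 | C.1 ⊆ B2} := show B2 ⊆ B2 from subset_rfl
    rw [← heq] at m2
    exact Finset.Subset.antisymm m1 m2
  rw [Set.ncard_image_of_injOn hinjOn]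
  have hcodeInj : Set.InjOn (code k) ↑(fullF k n p) := by
    intro u hu v hv h
    rw [Finset.mem_coe, mem_fullF hk] at hu hv
    exact code_inj hk0 u.length rfl hu.1 hv.1 (by rw [hu.2.1, hv.2.1]) h
  have hseteq : {B | B ∈ 𝒜 ∧ B.card = p ∧ ∀ B' ∈ 𝒜, B ⊆ B' → B' = B}
      = ↑((fullF k n p).image (code k)) := by
    ext B
    simp only [Set.mem_setOf_eq, Finset.coe_image, Set.mem_image, Finset.mem_coe]
    constructor
    · rintro ⟨⟨u, hu, hlen, rfl⟩, hcard, hmax⟩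
      refine ⟨u, ?_, rfl⟩
      rw [mem_fullF hk]
      refine ⟨hu, hlen, ?_, hcard⟩
      intro h0
      obtain ⟨a, b, rfl⟩ := List.append_of_mem h0
      have hpell1 : GenPell k (a ++ 1 :: b) := pell_rep0 hk0 a.length a b 1 rfl (by omega) hu
      obtain ⟨hnot, heq⟩ := code_rep0 hk0 a.length a b 1 rfl (by omega) (by omega) hu
      have hmem𝒜 : code k (a ++ 1 :: b) ∈ 𝒜 := ⟨a ++ 1 :: b, hpell1,
        by simp only [List.length_append, List.length_cons] at hlen ⊢; exact hlen, rfl⟩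
      have hBeq := hmax _ hmem𝒜 (by rw [heq]; exact Finset.subset_insert _ _)
      rw [heq] at hBeq
      exact hnot (hBeq ▸ Finset.mem_insert_self _ _)
    · rintro ⟨u, hu, rfl⟩
      rw [mem_fullF hk] at hu
      obtain ⟨hpell, hlen, h0, hcard⟩ := hu
      refine ⟨⟨u, hpell, hlen, rfl⟩, hcard, ?_⟩
      rintro B' ⟨w, hw, hlw, rfl⟩ hsub
      by_contra hne
      have hssub : code k u ⊂ code k w :=
        ⟨hsub, fun hc => hne (Finset.Subset.antisymm hc hsub)⟩
      obtain ⟨x, hxw, hxu⟩ := Finset.exists_of_ssubset hssub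
      have hsub2 : insert x (code k u) ⊆ code k w := Finset.insert_subset hxw hsub
      obtain ⟨w', hw', hlw', hcw'⟩ := code_down hk0
        ((code k w).card - (insert x (code k u)).card) hw hsub2
        (by have := Finset.card_le_card hsub2; omega)
      have hmun := code_step hk0 u.length rfl hpell hw'
        (by rw [hlen, hlw'.trans hlw]) ⟨x, hxu, hcw'⟩
      rcases hmun with ⟨a, b, i, -, -, hu', -⟩ | ⟨a, b, hu', -⟩
      · exact h0 (hu' ▸ List.mem_append_right a (List.mem_cons_self (a := 0) (l := b)))
      · exact h0 (hu' ▸ List.mem_append_right a (List.mem_cons_self (a := 0) (l := 0 :: b)))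
  rw [hseteq, Set.ncard_coe_finset, Finset.card_image_of_injOn hcodeInj, card_fullF hk, Rval]

end PartI
end
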